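/- arXiv:1503.08461 — 6 statements merged into one kernel-verified Lean document; each statement's English description precedes it below -/
import Mathlib

section
/- The map Φ : ℂ × {t ∈ ℂ : |t| = 1} → SU(2) defined by Φ(ζ, t) = k(ζ)·d(t) is a homeomorphism onto its image, and its image {g ∈ SU(2) : g₁₁ ≠ 0} is an open dense subset of SU(2). -/
/-!
Every element of SU(2) is `[[a, b], [-b̄, ā]]` with `|a|² + |b|² = 1`, and `k(ζ) d(t)` is the one
with `a = c t`, `b = -c ζ̄ t̄`, where `c = (1 + |ζ|²)^(-1/2) > 0`. Hence on the open set `g₁₁ ≠ 0` the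
map `g ↦ (g₂₁ / g₁₁, g₁₁ / |g₁₁|)` is a continuous left inverse, and a right inverse on SU(2).
The image is dense: if `g₁₁ = 0` then `g₁₂ ≠ 0`, and `g k(ζ) → g` as `ζ → 0` with
`(g k(ζ))₁₁ = c g₁₂ ζ ≠ 0` for `ζ ≠ 0`.
-/

open Matrix Complex

/-- `k(ζ) = (1+|ζ|²)^(−1/2) · [[1, −conj ζ],[ζ, 1]]`, an element of SU(2). -/
noncomputable def kmat (ζ : ℂ) : Matrix (Fin 2) (Fin 2) ℂ :=
  ((Real.sqrt (1 + ‖ζ‖ ^ 2) : ℂ))⁻¹ • !![1, -(starRingEnd ℂ ζ); ζ, 1]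

/-- `d(t) = diag(t, conj t)`. -/
noncomputable def dmat (t : ℂ) : Matrix (Fin 2) (Fin 2) ℂ :=
  !![t, 0; 0, starRingEnd ℂ t]

/-- SU(2), as a subset of the 2×2 complex matrices. -/
def SU2 : Set (Matrix (Fin 2) (Fin 2) ℂ) :=
  {g | g ∈ Matrix.unitaryGroup (Fin 2) ℂ ∧ g.det = 1}

open ComplexConjugate Topology Filter

section LeftInverse

variable {X Y : Type*} [TopologicalSpace X] [TopologicalSpace Y]

theorem Topology.IsEmbedding.of_leftInverse_codRestrict {f : X → Y} {s : Set Y}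
    (hf : Continuous f) (hfs : ∀ x, f x ∈ s) {g : s → X} (hg : Continuous g)
    (hgf : ∀ x, g ⟨f x, hfs x⟩ = x) : IsEmbedding f :=
  IsEmbedding.subtypeVal.comp <| IsEmbedding.of_leftInverse (g := Set.codRestrict f s hfs)
    hgf hg (hf.codRestrict hfs)

end LeftInverse

def suMat (a b : ℂ) : Matrix (Fin 2) (Fin 2) ℂ :=
  !![a, b; -conj b, conj a]

theorem suMat_mul (a b c d : ℂ) :
    suMat a b * suMat c d = suMat (a * c - b * conj d) (a * d + b * conj c) := by
  ext i j
  fin_cases i <;> fin_cases j <;> simp [suMat, mul_apply, Fin.sum_univ_two] <;> ring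

theorem det_suMat (a b : ℂ) : (suMat a b).det = ‖a‖ ^ 2 + ‖b‖ ^ 2 := by
  rw [det_fin_two]
  simp only [suMat, of_apply, cons_val', cons_val_zero, cons_val_one, empty_val',
    cons_val_fin_one, mul_conj', mul_neg, sub_neg_eq_add, ← conj_mul']

theorem SU2_eq_specialUnitaryGroup : SU2 = specialUnitaryGroup (Fin 2) ℂ := by
  ext g
  exact (mem_specialUnitaryGroup_iff).symm

theorem mul_mem_SU2 {g h : Matrix (Fin 2) (Fin 2) ℂ} (hg : g ∈ SU2) (hh : h ∈ SU2) :
    g * h ∈ SU2 := by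
  rw [SU2_eq_specialUnitaryGroup] at *
  exact mul_mem hg hh

theorem suMat_mem_SU2 {a b : ℂ} (h : ‖a‖ ^ 2 + ‖b‖ ^ 2 = 1) : suMat a b ∈ SU2 := by
  refine ⟨?_, by rw [det_suMat]; exact_mod_cast h⟩
  rw [mem_unitaryGroup_iff']
  have h' : a * conj a + b * conj b = 1 := by rw [mul_conj', mul_conj']; exact_mod_cast h
  ext i j
  fin_cases i <;> fin_cases j <;>
    simp [suMat, mul_apply, Fin.sum_univ_two, star_apply] <;>
    first | ring1 | linear_combination h'

theorem eq_suMat_of_mem_SU2 {g : Matrix (Fin 2) (Fin 2) ℂ} (hg : g ∈ SU2) :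
    g = suMat (g 0 0) (g 0 1) := by
  have hstar : star g = g.adjugate := by
    rw [← Matrix.inv_eq_left_inv (mem_unitaryGroup_iff'.1 hg.1), Matrix.inv_def, hg.2]
    simp
  rw [adjugate_fin_two] at hstar
  have h10 := congrFun (congrFun hstar 1) 0
  have h11 := congrFun (congrFun hstar 1) 1
  simp only [star_apply, of_apply, cons_val', cons_val_zero, cons_val_one, empty_val',
    cons_val_fin_one, Complex.star_def] at h10 h11
  ext i j
  fin_cases i <;> fin_cases j <;> simp [suMat, ← h11, h10]

theorem norm_sq_add_norm_sq_of_mem_SU2 {g : Matrix (Fin 2) (Fin 2) ℂ} (hg : g ∈ SU2) :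
    ‖g 0 0‖ ^ 2 + ‖g 0 1‖ ^ 2 = 1 := by
  have hdet := hg.2
  rw [eq_suMat_of_mem_SU2 hg, det_suMat] at hdet
  exact_mod_cast hdet

noncomputable def kscale (ζ : ℂ) : ℝ :=
  (Real.sqrt (1 + ‖ζ‖ ^ 2))⁻¹

theorem kscale_pos (ζ : ℂ) : 0 < kscale ζ := by
  unfold kscale
  positivity

theorem kscale_sq_mul (ζ : ℂ) : kscale ζ ^ 2 * (1 + ‖ζ‖ ^ 2) = 1 := by
  rw [kscale, inv_pow, Real.sq_sqrt (by positivity), inv_mul_cancel₀ (by positivity)]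

theorem kscale_div_eq_norm {a c : ℂ} (ha : a ≠ 0) (h : ‖a‖ ^ 2 + ‖c‖ ^ 2 = 1) :
    kscale (c / a) = ‖a‖ := by
  have hsum : 1 + ‖c / a‖ ^ 2 = (‖a‖ ^ 2)⁻¹ := by
    rw [norm_div, div_pow]
    field_simp
    linear_combination h
  rw [kscale, hsum, Real.sqrt_inv, Real.sqrt_sq (norm_nonneg a), inv_inv]

theorem continuous_kscale : Continuous kscale :=
  (Real.continuous_sqrt.comp (continuous_const.add (continuous_norm.pow 2))).inv₀
    fun ζ ↦ (Real.sqrt_pos.2 (by positivity : (0 : ℝ) < 1 + ‖ζ‖ ^ 2)).ne'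

theorem kmat_eq_suMat (ζ : ℂ) : kmat ζ = suMat (kscale ζ) (-(kscale ζ * conj ζ)) := by
  ext i j
  fin_cases i <;> fin_cases j <;> simp [kmat, suMat, kscale]

theorem dmat_eq_suMat (t : ℂ) : dmat t = suMat t 0 := by
  ext i j
  fin_cases i <;> fin_cases j <;> simp [dmat, suMat]

theorem kmat_mul_dmat (ζ t : ℂ) :
    kmat ζ * dmat t = suMat (kscale ζ * t) (-(kscale ζ * conj ζ * conj t)) := by
  rw [kmat_eq_suMat, dmat_eq_suMat, suMat_mul]
  simp

theorem kmat_mem_SU2 (ζ : ℂ) : kmat ζ ∈ SU2 := by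
  rw [kmat_eq_suMat]
  refine suMat_mem_SU2 ?_
  simp only [norm_neg, norm_mul, Complex.norm_real, Real.norm_eq_abs, RCLike.norm_conj,
    abs_of_pos (kscale_pos ζ)]
  linear_combination kscale_sq_mul ζ

theorem dmat_mem_SU2 {t : ℂ} (ht : ‖t‖ = 1) : dmat t ∈ SU2 := by
  rw [dmat_eq_suMat]
  exact suMat_mem_SU2 (by simp [ht])

theorem kmat_zero : kmat 0 = 1 := by
  ext i j
  fin_cases i <;> fin_cases j <;> simp [kmat]

theorem continuous_kmat : Continuous kmat := by
  have := continuous_kscale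
  rw [funext kmat_eq_suMat]
  refine continuous_matrix fun i j ↦ ?_
  fin_cases i <;> fin_cases j <;> simp [suMat] <;> fun_prop

theorem continuous_dmat : Continuous dmat := by
  refine continuous_matrix fun i j ↦ ?_
  fin_cases i <;> fin_cases j <;> simp [dmat] <;> fun_prop

noncomputable def suParam (p : ℂ × {t : ℂ // ‖t‖ = 1}) : Matrix (Fin 2) (Fin 2) ℂ :=
  kmat p.1 * dmat p.2

theorem suParam_mem_SU2 (p : ℂ × {t : ℂ // ‖t‖ = 1}) : suParam p ∈ SU2 :=
  mul_mem_SU2 (kmat_mem_SU2 p.1) (dmat_mem_SU2 p.2.2)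

theorem suParam_apply_zero_zero (p : ℂ × {t : ℂ // ‖t‖ = 1}) :
    suParam p 0 0 = kscale p.1 * p.2 := by
  simp [suParam, kmat_mul_dmat, suMat]

theorem suParam_apply_one_zero (p : ℂ × {t : ℂ // ‖t‖ = 1}) :
    suParam p 1 0 = kscale p.1 * p.1 * p.2 := by
  simp [suParam, kmat_mul_dmat, suMat]

theorem suParam_apply_zero_zero_ne_zero (p : ℂ × {t : ℂ // ‖t‖ = 1}) : suParam p 0 0 ≠ 0 := by
  rw [suParam_apply_zero_zero]
  exact mul_ne_zero (ofReal_ne_zero.2 (kscale_pos p.1).ne') (ne_zero_of_norm_ne_zero (by simp [p.2.2]))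

theorem continuous_suParam : Continuous suParam :=
  (continuous_kmat.comp continuous_fst).matrix_mul
    (continuous_dmat.comp (continuous_subtype_val.comp continuous_snd))

noncomputable def suCoord (g : {g : Matrix (Fin 2) (Fin 2) ℂ // g 0 0 ≠ 0}) :
    ℂ × {t : ℂ // ‖t‖ = 1} :=
  (g.1 1 0 / g.1 0 0, ⟨g.1 0 0 / ‖g.1 0 0‖, by simp [g.2]⟩)

theorem continuous_suCoord : Continuous suCoord := by
  have h00 : Continuous fun g : {g : Matrix (Fin 2) (Fin 2) ℂ // g 0 0 ≠ 0} ↦ g.1 0 0 :=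
    continuous_subtype_val.matrix_elem 0 0
  have h10 : Continuous fun g : {g : Matrix (Fin 2) (Fin 2) ℂ // g 0 0 ≠ 0} ↦ g.1 1 0 :=
    continuous_subtype_val.matrix_elem 1 0
  refine (h10.div h00 fun g ↦ g.2).prodMk (Continuous.subtype_mk ?_ _)
  exact h00.div (continuous_ofReal.comp h00.norm) fun g ↦ ofReal_ne_zero.2 (norm_ne_zero_iff.2 g.2)

theorem suCoord_suParam (p : ℂ × {t : ℂ // ‖t‖ = 1}) :
    suCoord ⟨suParam p, suParam_apply_zero_zero_ne_zero p⟩ = p := by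
  obtain ⟨ζ, t, ht⟩ := p
  have hc : (kscale ζ : ℂ) ≠ 0 := ofReal_ne_zero.2 (kscale_pos ζ).ne'
  have ht0 : t ≠ 0 := ne_zero_of_norm_ne_zero (by simp [ht])
  refine Prod.ext ?_ (Subtype.ext ?_)
  · change suParam _ 1 0 / suParam _ 0 0 = ζ
    rw [suParam_apply_one_zero, suParam_apply_zero_zero]
    field_simp
  · change suParam _ 0 0 / ‖suParam _ 0 0‖ = t
    rw [suParam_apply_zero_zero]
    simp [ht, abs_of_pos (kscale_pos ζ), hc]

theorem suParam_suCoord {g : Matrix (Fin 2) (Fin 2) ℂ} (hg : g ∈ SU2) (h0 : g 0 0 ≠ 0) :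
    suParam (suCoord ⟨g, h0⟩) = g := by
  have hc := kscale_div_eq_norm h0 (c := -conj (g 0 1)) (by simpa using norm_sq_add_norm_sq_of_mem_SU2 hg)
  have hg10 : g 1 0 = -conj (g 0 1) := congrFun (congrFun (eq_suMat_of_mem_SU2 hg) 1) 0
  change kmat (g 1 0 / g 0 0) * dmat (g 0 0 / ‖g 0 0‖) = g
  conv_rhs => rw [eq_suMat_of_mem_SU2 hg]
  have hn : (‖g 0 0‖ : ℂ) ≠ 0 := ofReal_ne_zero.2 (norm_ne_zero_iff.2 h0)
  rw [kmat_mul_dmat, hg10, hc]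
  congr 1
  · field_simp
  · have hc0 : conj (g 0 0) ≠ 0 := (map_ne_zero _).2 h0
    simp only [map_div₀, map_neg, conj_conj, conj_ofReal]
    field_simp

theorem isEmbedding_suParam : IsEmbedding suParam :=
  .of_leftInverse_codRestrict continuous_suParam suParam_apply_zero_zero_ne_zero
    continuous_suCoord suCoord_suParam

theorem range_suParam : Set.range suParam = {g | g ∈ SU2 ∧ g 0 0 ≠ 0} := by
  ext g
  constructor
  · rintro ⟨p, rfl⟩
    exact ⟨suParam_mem_SU2 p, suParam_apply_zero_zero_ne_zero p⟩
  · rintro ⟨hg, h0⟩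
    exact ⟨_, suParam_suCoord hg h0⟩

theorem isOpen_setOf_SU2_apply_zero_zero_ne_zero :
    IsOpen {g : SU2 | (g : Matrix (Fin 2) (Fin 2) ℂ) 0 0 ≠ 0} :=
  isOpen_ne.preimage (continuous_subtype_val.matrix_elem 0 0)

theorem dense_setOf_SU2_apply_zero_zero_ne_zero :
    Dense {g : SU2 | (g : Matrix (Fin 2) (Fin 2) ℂ) 0 0 ≠ 0} := by
  intro g
  by_cases h0 : (g : Matrix (Fin 2) (Fin 2) ℂ) 0 0 = 0
  swap
  · exact subset_closure h0
  have h01 : (g : Matrix (Fin 2) (Fin 2) ℂ) 0 1 ≠ 0 := fun h01 ↦ by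
    simpa [h0, h01] using norm_sq_add_norm_sq_of_mem_SU2 g.2
  let f : ℂ → SU2 := fun ζ ↦ ⟨g * kmat ζ, mul_mem_SU2 g.2 (kmat_mem_SU2 ζ)⟩
  have hf : Tendsto f (𝓝[≠] 0) (𝓝 g) := by
    have hcont : Continuous f := (continuous_const.matrix_mul continuous_kmat).subtype_mk _
    have hf0 : f 0 = g := Subtype.ext (by simp [f, kmat_zero])
    exact hf0 ▸ hcont.continuousAt.tendsto.mono_left nhdsWithin_le_nhds
  refine mem_closure_of_tendsto hf (eventually_nhdsWithin_of_forall fun ζ hζ ↦ ?_)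
  have hc : (kscale ζ : ℂ) ≠ 0 := ofReal_ne_zero.2 (kscale_pos ζ).ne'
  change (g * kmat ζ : Matrix (Fin 2) (Fin 2) ℂ) 0 0 ≠ 0
  simpa [kmat_eq_suMat, suMat, mul_apply, Fin.sum_univ_two, h0, h01, hc] using hζ

/-- The map `Φ(ζ,t) = k(ζ)·d(t)` on `ℂ × (unit circle)` is a homeomorphism onto its image
(an embedding), its image is `{g ∈ SU(2) : g₁₁ ≠ 0}`, and this image is open and dense
in SU(2) (with its subspace topology from the 2×2 matrices). -/
theorem su2_root_subgroup_coordinates_homeomorphism :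
    Topology.IsEmbedding (fun p : ℂ × {t : ℂ // ‖t‖ = 1} => kmat p.1 * dmat p.2.1) ∧
    Set.range (fun p : ℂ × {t : ℂ // ‖t‖ = 1} => kmat p.1 * dmat p.2.1)
      = {g | g ∈ SU2 ∧ g 0 0 ≠ 0} ∧
    IsOpen {g : SU2 | (g : Matrix (Fin 2) (Fin 2) ℂ) 0 0 ≠ 0} ∧
    Dense {g : SU2 | (g : Matrix (Fin 2) (Fin 2) ℂ) 0 0 ≠ 0} :=
  ⟨isEmbedding_suParam, range_suParam, isOpen_setOf_SU2_apply_zero_zero_ne_zero,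
    dense_setOf_SU2_apply_zero_zero_ne_zero⟩
end

section
/- Let p, q ≥ 1 and let g be an element of SU(p,q), written in block form g = [[a, b],[c, d]] with a of size p×p, b of size p×q, c of size q×p, d of size q×q. Then: (i) a and d are invertible; (ii) setting Z = c·a⁻¹, the matrix I_p − Zᴴ·Z is positive definite; (iii) g admits a factorization g = [[I_p, 0],[Z', I_q]] · [[A, 0],[0, D]] · [[I_p, W],[0, I_q]] with Z' a q×p matrix, A ∈ GL(p,ℂ), D ∈ GL(q,ℂ), W a p×q matrix, and this factorization is unique, with Z' = c·a⁻¹, A = a, D = d − c·a⁻¹·b, W = a⁻¹·b. -/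
open Matrix
open scoped ComplexOrder

/-- `J = diag(I_p, −I_q)`, the defining form of SU(p,q). -/
def Jpq (p q : ℕ) : Matrix (Fin p ⊕ Fin q) (Fin p ⊕ Fin q) ℂ :=
  Matrix.fromBlocks 1 0 0 (-1)

/-!
The `(1,1)` and `(2,2)` blocks of `gᴴ J g = J` read `aᴴa = 1 + cᴴc` and `dᴴd = 1 + bᴴb`, so
`aᴴa` and `dᴴd` are positive definite and `a`, `d` are invertible; conjugating the first identity
by `a⁻¹` gives `1 − (ca⁻¹)ᴴ(ca⁻¹) = (a⁻¹)ᴴa⁻¹ > 0`. The factorization is the Schur-complement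
LDU decomposition with pivot `a`: comparing blocks of `[[A, AW], [Z'A, Z'AW + D]]` with `g`
forces every factor, and the Schur complement `d − ca⁻¹b` is invertible because `g` is, `J`
being invertible.
-/

namespace Matrix

variable {m n : Type*} [Fintype m] [Fintype n] [DecidableEq n]

section LDU

variable {R : Type*} [CommRing R] [DecidableEq m]

theorem fromBlocks_ldu_mul (Z : Matrix n m R) (A : Matrix m m R) (D : Matrix n n R)
    (W : Matrix m n R) :
    fromBlocks 1 0 Z 1 * fromBlocks A 0 0 D * fromBlocks 1 W 0 1 =
      fromBlocks A (A * W) (Z * A) (Z * A * W + D) := by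
  simp only [fromBlocks_multiply, Matrix.one_mul, Matrix.mul_one, Matrix.mul_zero,
    Matrix.zero_mul, add_zero, zero_add]

theorem eq_of_fromBlocks_eq_ldu {a A : Matrix m m R} {b W : Matrix m n R} {c Z : Matrix n m R}
    {d D : Matrix n n R} (hA : IsUnit A)
    (h : fromBlocks a b c d = fromBlocks 1 0 Z 1 * fromBlocks A 0 0 D * fromBlocks 1 W 0 1) :
    Z = c * a⁻¹ ∧ A = a ∧ D = d - c * a⁻¹ * b ∧ W = a⁻¹ * b := by
  rw [fromBlocks_ldu_mul, fromBlocks_inj] at h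
  obtain ⟨rfl, rfl, rfl, rfl⟩ := h
  have ha : IsUnit a.det := (isUnit_iff_isUnit_det a).1 hA
  refine ⟨?_, rfl, ?_, ?_⟩
  · rw [Matrix.mul_assoc, mul_nonsing_inv a ha, Matrix.mul_one]
  · rw [Matrix.mul_assoc Z a a⁻¹, mul_nonsing_inv a ha, Matrix.mul_one, Matrix.mul_assoc,
      add_sub_cancel_left]
  · rw [nonsing_inv_mul_cancel_left a W ha]

theorem fromBlocks_eq_ldu {a : Matrix m m R} (b : Matrix m n R) (c : Matrix n m R)
    (d : Matrix n n R) (ha : IsUnit a) :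
    fromBlocks a b c d = fromBlocks 1 0 (c * a⁻¹) 1 * fromBlocks a 0 0 (d - c * a⁻¹ * b) *
      fromBlocks 1 (a⁻¹ * b) 0 1 := by
  have := ha.invertible
  simpa only [invOf_eq_nonsing_inv] using fromBlocks_eq_of_invertible₁₁ a b c d

theorem isUnit_schur_complement₁₁ {a : Matrix m m R} {b : Matrix m n R} {c : Matrix n m R}
    {d : Matrix n n R} (ha : IsUnit a) (hg : IsUnit (fromBlocks a b c d)) :
    IsUnit (d - c * a⁻¹ * b) := by
  have := ha.invertible
  rw [isUnit_iff_isUnit_det, det_fromBlocks₁₁, invOf_eq_nonsing_inv] at hg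
  exact (isUnit_iff_isUnit_det _).2 (isUnit_of_mul_isUnit_right hg)

theorem isUnit_and_isUnit_and_eq_ldu_iff {g : Matrix (m ⊕ n) (m ⊕ n) R}
    (hg : IsUnit g) (ha : IsUnit g.toBlocks₁₁) (Z : Matrix n m R) (A : Matrix m m R)
    (D : Matrix n n R) (W : Matrix m n R) :
    (IsUnit A ∧ IsUnit D ∧
        g = fromBlocks 1 0 Z 1 * fromBlocks A 0 0 D * fromBlocks 1 W 0 1) ↔
      (Z = g.toBlocks₂₁ * g.toBlocks₁₁⁻¹ ∧ A = g.toBlocks₁₁ ∧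
        D = g.toBlocks₂₂ - g.toBlocks₂₁ * g.toBlocks₁₁⁻¹ * g.toBlocks₁₂ ∧
        W = g.toBlocks₁₁⁻¹ * g.toBlocks₁₂) := by
  rw [← fromBlocks_toBlocks g] at hg
  constructor
  · rintro ⟨hA, -, h⟩
    rw [← fromBlocks_toBlocks g] at h
    exact eq_of_fromBlocks_eq_ldu hA h
  · rintro ⟨rfl, rfl, rfl, rfl⟩
    refine ⟨ha, isUnit_schur_complement₁₁ ha hg, ?_⟩
    conv_lhs => rw [← fromBlocks_toBlocks g]
    exact fromBlocks_eq_ldu _ _ _ ha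

end LDU

section PosDef

variable {𝕜 : Type*} [Field 𝕜] [PartialOrder 𝕜] [StarRing 𝕜] [StarOrderedRing 𝕜]

theorem isUnit_of_conjTranspose_mul_self_eq_one_add {a : Matrix n n 𝕜} {c : Matrix m n 𝕜}
    (h : aᴴ * a = 1 + cᴴ * c) : IsUnit a := by
  have hpos : (aᴴ * a).PosDef :=
    h ▸ PosDef.one.add_posSemidef (posSemidef_conjTranspose_mul_self c)
  have hdet := (isUnit_iff_isUnit_det _).1 hpos.isUnit
  rw [det_mul] at hdet
  exact (isUnit_iff_isUnit_det a).2 (isUnit_of_mul_isUnit_right hdet)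

theorem posDef_one_sub_conjTranspose_mul_self_mul_inv {a : Matrix n n 𝕜} {c : Matrix m n 𝕜}
    (h : aᴴ * a = 1 + cᴴ * c) : (1 - (c * a⁻¹)ᴴ * (c * a⁻¹)).PosDef := by
  have ha := isUnit_of_conjTranspose_mul_self_eq_one_add h
  have hinv : a * a⁻¹ = 1 := mul_nonsing_inv a ((isUnit_iff_isUnit_det a).1 ha)
  have key : 1 - (c * a⁻¹)ᴴ * (c * a⁻¹) = (a⁻¹)ᴴ * 1 * a⁻¹ :=
    calc 1 - (c * a⁻¹)ᴴ * (c * a⁻¹)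
        = (a * a⁻¹)ᴴ * (a * a⁻¹) - (a⁻¹)ᴴ * (cᴴ * c) * a⁻¹ := by
          rw [hinv, conjTranspose_one, Matrix.one_mul, conjTranspose_mul, Matrix.mul_assoc,
            Matrix.mul_assoc, Matrix.mul_assoc]
      _ = (a⁻¹)ᴴ * (aᴴ * a - cᴴ * c) * a⁻¹ := by
          rw [conjTranspose_mul, Matrix.mul_sub, Matrix.sub_mul]
          simp only [Matrix.mul_assoc]
      _ = (a⁻¹)ᴴ * 1 * a⁻¹ := by rw [h, add_sub_cancel_right]
  rw [key]
  exact PosDef.one.conjTranspose_mul_mul_same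
    (mulVec_injective_of_isUnit (isUnit_nonsing_inv_iff.2 ha))

end PosDef

end Matrix

theorem conjTranspose_fromBlocks_mul_Jpq_mul {p q : ℕ} (a : Matrix (Fin p) (Fin p) ℂ)
    (b : Matrix (Fin p) (Fin q) ℂ) (c : Matrix (Fin q) (Fin p) ℂ)
    (d : Matrix (Fin q) (Fin q) ℂ) :
    (fromBlocks a b c d)ᴴ * Jpq p q * fromBlocks a b c d =
      fromBlocks (aᴴ * a - cᴴ * c) (aᴴ * b - cᴴ * d) (bᴴ * a - dᴴ * c)
        (bᴴ * b - dᴴ * d) := by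
  simp only [Jpq, fromBlocks_conjTranspose, fromBlocks_multiply, Matrix.mul_one, Matrix.mul_zero,
    Matrix.mul_neg, Matrix.neg_mul, add_zero, zero_add, sub_eq_add_neg]

theorem conjTranspose_toBlocks_mul_self_of_Jpq {p q : ℕ}
    {g : Matrix (Fin p ⊕ Fin q) (Fin p ⊕ Fin q) ℂ}
    (hJ : gᴴ * Jpq p q * g = Jpq p q) :
    g.toBlocks₁₁ᴴ * g.toBlocks₁₁ = 1 + g.toBlocks₂₁ᴴ * g.toBlocks₂₁ ∧
      g.toBlocks₂₂ᴴ * g.toBlocks₂₂ = 1 + g.toBlocks₁₂ᴴ * g.toBlocks₁₂ := by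
  rw [← fromBlocks_toBlocks g, conjTranspose_fromBlocks_mul_Jpq_mul, Jpq, fromBlocks_inj] at hJ
  obtain ⟨h₁₁, -, -, h₂₂⟩ := hJ
  constructor
  · rw [← h₁₁, sub_add_cancel]
  · rw [← neg_sub, neg_inj] at h₂₂
    rw [← h₂₂, sub_add_cancel]

theorem isUnit_of_conjTranspose_mul_Jpq_mul_eq {p q : ℕ}
    {g : Matrix (Fin p ⊕ Fin q) (Fin p ⊕ Fin q) ℂ} (hJ : gᴴ * Jpq p q * g = Jpq p q) :
    IsUnit g := by
  have hJdet : IsUnit (Jpq p q).det := by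
    simp [Jpq, det_fromBlocks_zero₂₁, det_neg]
  rw [← hJ, det_mul] at hJdet
  exact (isUnit_iff_isUnit_det g).2 (isUnit_of_mul_isUnit_right hJdet)

theorem supq_block_triangular_factorization_general
    (p q : ℕ)
    (g : Matrix (Fin p ⊕ Fin q) (Fin p ⊕ Fin q) ℂ)
    (hJ : g.conjTranspose * Jpq p q * g = Jpq p q) :
    IsUnit g.toBlocks₁₁ ∧ IsUnit g.toBlocks₂₂ ∧
    ((1 : Matrix (Fin p) (Fin p) ℂ)
      - (g.toBlocks₂₁ * g.toBlocks₁₁⁻¹).conjTranspose * (g.toBlocks₂₁ * g.toBlocks₁₁⁻¹)).PosDef ∧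
    (∀ (Z' : Matrix (Fin q) (Fin p) ℂ) (A : Matrix (Fin p) (Fin p) ℂ)
        (D : Matrix (Fin q) (Fin q) ℂ) (W : Matrix (Fin p) (Fin q) ℂ),
      (IsUnit A ∧ IsUnit D ∧
          g = Matrix.fromBlocks 1 0 Z' 1 * Matrix.fromBlocks A 0 0 D * Matrix.fromBlocks 1 W 0 1)
        ↔ (Z' = g.toBlocks₂₁ * g.toBlocks₁₁⁻¹ ∧ A = g.toBlocks₁₁ ∧
            D = g.toBlocks₂₂ - g.toBlocks₂₁ * g.toBlocks₁₁⁻¹ * g.toBlocks₁₂ ∧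
            W = g.toBlocks₁₁⁻¹ * g.toBlocks₁₂)) := by
  obtain ⟨h₁₁, h₂₂⟩ := conjTranspose_toBlocks_mul_self_of_Jpq hJ
  have ha := isUnit_of_conjTranspose_mul_self_eq_one_add h₁₁
  exact ⟨ha, isUnit_of_conjTranspose_mul_self_eq_one_add h₂₂,
    posDef_one_sub_conjTranspose_mul_self_mul_inv h₁₁,
    isUnit_and_isUnit_and_eq_ldu_iff (isUnit_of_conjTranspose_mul_Jpq_mul_eq hJ) ha⟩

/-- Block triangular factorization in SU(p,q): if `g = [[a,b],[c,d]] ∈ SU(p,q)` then `a` and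
`d` are invertible, `I_p − (c·a⁻¹)ᴴ·(c·a⁻¹)` is positive definite, and `g` factors uniquely
as (block lower unitriangular)·(block diagonal)·(block upper unitriangular), with the factors
given explicitly by `Z' = c·a⁻¹`, `A = a`, `D = d − c·a⁻¹·b`, `W = a⁻¹·b`. -/
theorem supq_block_triangular_factorization
    (p q : ℕ) (hp : 1 ≤ p) (hq : 1 ≤ q)
    (g : Matrix (Fin p ⊕ Fin q) (Fin p ⊕ Fin q) ℂ)
    (hdet : g.det = 1) (hJ : g.conjTranspose * Jpq p q * g = Jpq p q) :
    IsUnit g.toBlocks₁₁ ∧ IsUnit g.toBlocks₂₂ ∧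
    ((1 : Matrix (Fin p) (Fin p) ℂ)
      - (g.toBlocks₂₁ * g.toBlocks₁₁⁻¹).conjTranspose * (g.toBlocks₂₁ * g.toBlocks₁₁⁻¹)).PosDef ∧
    (∀ (Z' : Matrix (Fin q) (Fin p) ℂ) (A : Matrix (Fin p) (Fin p) ℂ)
        (D : Matrix (Fin q) (Fin q) ℂ) (W : Matrix (Fin p) (Fin q) ℂ),
      (IsUnit A ∧ IsUnit D ∧
          g = Matrix.fromBlocks 1 0 Z' 1 * Matrix.fromBlocks A 0 0 D * Matrix.fromBlocks 1 W 0 1)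
        ↔ (Z' = g.toBlocks₂₁ * g.toBlocks₁₁⁻¹ ∧ A = g.toBlocks₁₁ ∧
            D = g.toBlocks₂₂ - g.toBlocks₂₁ * g.toBlocks₁₁⁻¹ * g.toBlocks₁₂ ∧
            W = g.toBlocks₁₁⁻¹ * g.toBlocks₁₂)) :=
  supq_block_triangular_factorization_general p q g hJ
end

section
/- Let p, q ≥ 1 and let Z be a q×p complex matrix such that I_p − Zᴴ·Z is positive definite. Then there exists g ∈ SU(p,q), with block form g = [[a, b],[c, d]] (a of size p×p), such that a is invertible and c·a⁻¹ = Z. Hence the set of lower block factors arising from elements of SU(p,q) is exactly {Z : I_p − Zᴴ·Z is positive definite}. -/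
open Matrix
open scoped ComplexOrder

/-!
If `1 - Zᴴ Z > 0` then also `1 - Z Zᴴ > 0` (both are Schur complements of `[[1, Zᴴ], [Z, 1]]`,
and they have the same determinant), so `1 - Zᴴ Z = Sᴴ S` and `1 - Z Zᴴ = Tᴴ T` with `S`, `T`
invertible. The matrix `g₀ = [[S⁻¹, Zᴴ T⁻¹], [Z S⁻¹, T⁻¹]]` then preserves `J` and has
`c a⁻¹ = Z`; preserving `J` forces `|det g₀| = 1`, and multiplying `g₀` by a `(p+q)`-th root of
`(det g₀)⁻¹`, which is again unimodular, moves it into SU(p,q) without changing `c a⁻¹`.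
Conversely, the `(1,1)` block of `gᴴ J g = J` reads `aᴴ a - cᴴ c = 1`, that is
`1 - (c a⁻¹)ᴴ (c a⁻¹) = (a⁻¹)ᴴ a⁻¹ > 0`.
-/

open scoped MatrixOrder

namespace Matrix

lemma fromBlocks_conjTranspose_mul_signature_mul {R : Type*} [Ring R] [StarRing R]
    {k l m n : Type*} [Fintype m] [Fintype n] [DecidableEq m] [DecidableEq n]
    (A : Matrix m k R) (B : Matrix m l R) (C : Matrix n k R) (D : Matrix n l R) :
    (fromBlocks A B C D)ᴴ * (fromBlocks 1 0 0 (-1) : Matrix (m ⊕ n) (m ⊕ n) R) *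
        fromBlocks A B C D =
      fromBlocks (Aᴴ * A - Cᴴ * C) (Aᴴ * B - Cᴴ * D) (Bᴴ * A - Dᴴ * C) (Bᴴ * B - Dᴴ * D) := by
  simp [fromBlocks_conjTranspose, fromBlocks_multiply, sub_eq_add_neg]

section Determinant

variable {ι : Type*} [Fintype ι] [DecidableEq ι]

lemma star_det_mul_det_eq_one_of_conjTranspose_mul_mul_eq {K : Type*} [Field K] [StarRing K]
    {J g : Matrix ι ι K} (hJ : J.det ≠ 0) (h : gᴴ * J * g = J) :
    star g.det * g.det = 1 := by
  have hdet := congrArg det h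
  rw [det_mul, det_mul, det_conjTranspose, mul_right_comm] at hdet
  exact mul_left_cancel₀ hJ (by rw [mul_one, mul_comm, hdet])

lemma exists_star_mul_self_eq_one_and_det_smul_eq_one {g : Matrix ι ι ℂ}
    (hg : star g.det * g.det = 1) : ∃ c : ℂ, star c * c = 1 ∧ (c • g).det = 1 := by
  rcases isEmpty_or_nonempty ι with hι | hι
  · exact ⟨1, by simp, det_isEmpty⟩
  have hdet : g.det ≠ 0 := left_ne_zero_of_mul_eq_one (mul_comm (star g.det) _ ▸ hg)
  obtain ⟨c, hc⟩ := IsAlgClosed.exists_pow_nat_eq (g.det)⁻¹ (Fintype.card_pos (α := ι))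
  refine ⟨c, ?_, by rw [det_smul, hc, inv_mul_cancel₀ hdet]⟩
  have hg_norm : ‖g.det‖ = 1 := by
    rw [Complex.star_def, Complex.conj_mul'] at hg
    exact (pow_eq_one_iff_of_nonneg (norm_nonneg _) two_ne_zero).mp (by exact_mod_cast hg)
  have hc_norm : ‖c‖ = 1 := by
    rw [← pow_eq_one_iff_of_nonneg (norm_nonneg c) (Fintype.card_ne_zero (α := ι)),
      ← norm_pow, hc, norm_inv, hg_norm, inv_one]
  rw [Complex.star_def, Complex.conj_mul', hc_norm]
  norm_num

end Determinant

variable {𝕜 : Type*} [RCLike 𝕜] {m n : Type*} [Fintype m] [Fintype n] [DecidableEq m]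
  [DecidableEq n]

lemma PosDef.exists_isUnit_eq_conjTranspose_mul_self {A : Matrix n n 𝕜} (hA : A.PosDef) :
    ∃ B : Matrix n n 𝕜, IsUnit B ∧ A = Bᴴ * B :=
  CStarAlgebra.isStrictlyPositive_iff_eq_star_mul_self.mp hA.isStrictlyPositive

lemma PosDef.one_sub_mul_conjTranspose_of_one_sub_conjTranspose_mul {Z : Matrix m n 𝕜}
    (hZ : (1 - Zᴴ * Z).PosDef) : (1 - Z * Zᴴ).PosDef := by
  let _ : Invertible (1 : Matrix m m 𝕜) := invertibleOne
  let _ : Invertible (1 : Matrix n n 𝕜) := invertibleOne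
  have hblock : (fromBlocks 1 Z Zᴴ 1).PosSemidef :=
    (PosDef.fromBlocks₁₁ Z 1 PosDef.one).mpr (by simpa using hZ.posSemidef)
  have hsemi : (1 - Z * Zᴴ).PosSemidef := by
    simpa using (PosDef.fromBlocks₂₂ 1 Z PosDef.one).mp hblock
  rw [hsemi.posDef_iff_det_ne_zero, det_one_sub_mul_comm]
  exact hZ.det_pos.ne'

lemma conjTranspose_inv_mul_mul_inv_of_eq_conjTranspose_mul_self {A S : Matrix n n 𝕜}
    (hS : IsUnit S) (hA : A = Sᴴ * S) : (S⁻¹)ᴴ * A * S⁻¹ = 1 := by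
  have hSS : S * S⁻¹ = 1 := mul_nonsing_inv S ((isUnit_iff_isUnit_det S).mp hS)
  rw [hA, ← Matrix.mul_assoc, ← conjTranspose_mul, Matrix.mul_assoc, hSS, conjTranspose_one,
    Matrix.one_mul]

lemma posDef_one_sub_conjTranspose_mul_self_toBlocks₂₁_mul_inv
    {g : Matrix (m ⊕ n) (m ⊕ n) 𝕜}
    (hg : gᴴ * fromBlocks 1 0 0 (-1) * g = fromBlocks 1 0 0 (-1)) (ha : IsUnit g.toBlocks₁₁) :
    (1 - (g.toBlocks₂₁ * g.toBlocks₁₁⁻¹)ᴴ * (g.toBlocks₂₁ * g.toBlocks₁₁⁻¹)).PosDef := by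
  set a := g.toBlocks₁₁
  set c := g.toBlocks₂₁
  have h₁₁ : aᴴ * a - cᴴ * c = 1 := by
    rw [← fromBlocks_toBlocks g, fromBlocks_conjTranspose_mul_signature_mul] at hg
    exact (fromBlocks_inj.mp hg).1
  have key : 1 - (c * a⁻¹)ᴴ * (c * a⁻¹) = star a⁻¹ * 1 * a⁻¹ :=
    calc 1 - (c * a⁻¹)ᴴ * (c * a⁻¹)
        = (a⁻¹)ᴴ * (aᴴ * a) * a⁻¹ - (a⁻¹)ᴴ * (cᴴ * c) * a⁻¹ := by
          rw [conjTranspose_inv_mul_mul_inv_of_eq_conjTranspose_mul_self ha rfl]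
          simp [conjTranspose_mul, Matrix.mul_assoc]
      _ = star a⁻¹ * 1 * a⁻¹ := by rw [← Matrix.sub_mul, ← Matrix.mul_sub, h₁₁]; rfl
  rw [key]
  exact (IsUnit.posDef_star_left_conjugate_iff (isUnit_nonsing_inv_iff.mpr ha)).mpr PosDef.one

lemma conjTranspose_mul_signature_mul_fromBlocks_inv {Z : Matrix n m 𝕜} {S : Matrix m m 𝕜}
    {T : Matrix n n 𝕜} (hS : IsUnit S) (hT : IsUnit T) (hSZ : 1 - Zᴴ * Z = Sᴴ * S)
    (hTZ : 1 - Z * Zᴴ = Tᴴ * T) :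
    (fromBlocks S⁻¹ (Zᴴ * T⁻¹) (Z * S⁻¹) T⁻¹)ᴴ * fromBlocks 1 0 0 (-1) *
        fromBlocks S⁻¹ (Zᴴ * T⁻¹) (Z * S⁻¹) T⁻¹ = fromBlocks 1 0 0 (-1) := by
  rw [fromBlocks_conjTranspose_mul_signature_mul]
  congr 1
  · rw [← conjTranspose_inv_mul_mul_inv_of_eq_conjTranspose_mul_self hS hSZ]
    simp [conjTranspose_mul, Matrix.mul_sub, Matrix.sub_mul, Matrix.mul_assoc]
  · simp [conjTranspose_mul, Matrix.mul_assoc]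
  · simp [conjTranspose_mul, Matrix.mul_assoc]
  · rw [← conjTranspose_inv_mul_mul_inv_of_eq_conjTranspose_mul_self hT hTZ]
    simp [conjTranspose_mul, Matrix.mul_sub, Matrix.sub_mul, Matrix.mul_assoc]

lemma exists_det_eq_one_toBlocks₂₁_mul_inv_eq {Z : Matrix n m ℂ} (hZ : (1 - Zᴴ * Z).PosDef) :
    ∃ g : Matrix (m ⊕ n) (m ⊕ n) ℂ,
      g.det = 1 ∧ gᴴ * fromBlocks 1 0 0 (-1) * g = fromBlocks 1 0 0 (-1) ∧
      IsUnit g.toBlocks₁₁ ∧ g.toBlocks₂₁ * g.toBlocks₁₁⁻¹ = Z := by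
  obtain ⟨S, hS, hSZ⟩ := hZ.exists_isUnit_eq_conjTranspose_mul_self
  obtain ⟨T, hT, hTZ⟩ := hZ.one_sub_mul_conjTranspose_of_one_sub_conjTranspose_mul
    |>.exists_isUnit_eq_conjTranspose_mul_self
  set g₀ := fromBlocks S⁻¹ (Zᴴ * T⁻¹) (Z * S⁻¹) T⁻¹
  have hg₀ : g₀ᴴ * fromBlocks 1 0 0 (-1) * g₀ = fromBlocks 1 0 0 (-1) :=
    conjTranspose_mul_signature_mul_fromBlocks_inv hS hT hSZ hTZ
  have hJ : (fromBlocks 1 0 0 (-1) : Matrix (m ⊕ n) (m ⊕ n) ℂ).det ≠ 0 := by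
    simp [det_fromBlocks_zero₂₁, det_neg]
  obtain ⟨c, hc, hdet⟩ := exists_star_mul_self_eq_one_and_det_smul_eq_one
    (star_det_mul_det_eq_one_of_conjTranspose_mul_mul_eq hJ hg₀)
  have hcS : IsUnit (c • S⁻¹) :=
    (isUnit_nonsing_inv_iff.mpr hS).smul (Units.mk0 c (right_ne_zero_of_mul_eq_one hc))
  refine ⟨c • g₀, hdet, ?_, ?_, ?_⟩
  · rw [conjTranspose_smul, smul_mul_assoc, mul_smul_comm, smul_mul_assoc, smul_smul, mul_comm,
      hc, one_smul, hg₀]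
  · simpa [g₀, fromBlocks_smul] using hcS
  · simp only [g₀, fromBlocks_smul, toBlocks_fromBlocks₁₁, toBlocks_fromBlocks₂₁,
      ← Matrix.mul_smul]
    exact mul_nonsing_inv_cancel_right _ _ ((isUnit_iff_isUnit_det _).mp hcS)

end Matrix

theorem supq_lower_factor_surjectivity_general (p q : ℕ) :
    (∀ Z : Matrix (Fin q) (Fin p) ℂ,
      ((1 : Matrix (Fin p) (Fin p) ℂ) - Z.conjTranspose * Z).PosDef →
      ∃ g : Matrix (Fin p ⊕ Fin q) (Fin p ⊕ Fin q) ℂ,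
        g.det = 1 ∧ g.conjTranspose * Jpq p q * g = Jpq p q ∧
        IsUnit g.toBlocks₁₁ ∧ g.toBlocks₂₁ * g.toBlocks₁₁⁻¹ = Z) ∧
    {Z : Matrix (Fin q) (Fin p) ℂ |
        ∃ g : Matrix (Fin p ⊕ Fin q) (Fin p ⊕ Fin q) ℂ,
          g.det = 1 ∧ g.conjTranspose * Jpq p q * g = Jpq p q ∧
          IsUnit g.toBlocks₁₁ ∧ g.toBlocks₂₁ * g.toBlocks₁₁⁻¹ = Z}
      = {Z : Matrix (Fin q) (Fin p) ℂ |
          ((1 : Matrix (Fin p) (Fin p) ℂ) - Z.conjTranspose * Z).PosDef} := by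
  refine ⟨fun Z hZ => exists_det_eq_one_toBlocks₂₁_mul_inv_eq hZ,
    Set.ext fun Z => ⟨?_, exists_det_eq_one_toBlocks₂₁_mul_inv_eq⟩⟩
  rintro ⟨g, -, hg, ha, rfl⟩
  exact posDef_one_sub_conjTranspose_mul_self_toBlocks₂₁_mul_inv hg ha

/-- Surjectivity of the lower block factor of SU(p,q): every `Z` with `I_p − Zᴴ·Z` positive
definite arises as `c·a⁻¹` from some `g = [[a,b],[c,d]] ∈ SU(p,q)` with `a` invertible; hence
the set of lower block factors of elements of SU(p,q) is exactly
`{Z : I_p − Zᴴ·Z positive definite}`. -/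
theorem supq_lower_factor_surjectivity (p q : ℕ) (hp : 1 ≤ p) (hq : 1 ≤ q) :
    (∀ Z : Matrix (Fin q) (Fin p) ℂ,
      ((1 : Matrix (Fin p) (Fin p) ℂ) - Z.conjTranspose * Z).PosDef →
      ∃ g : Matrix (Fin p ⊕ Fin q) (Fin p ⊕ Fin q) ℂ,
        g.det = 1 ∧ g.conjTranspose * Jpq p q * g = Jpq p q ∧
        IsUnit g.toBlocks₁₁ ∧ g.toBlocks₂₁ * g.toBlocks₁₁⁻¹ = Z) ∧
    {Z : Matrix (Fin q) (Fin p) ℂ |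
        ∃ g : Matrix (Fin p ⊕ Fin q) (Fin p ⊕ Fin q) ℂ,
          g.det = 1 ∧ g.conjTranspose * Jpq p q * g = Jpq p q ∧
          IsUnit g.toBlocks₁₁ ∧ g.toBlocks₂₁ * g.toBlocks₁₁⁻¹ = Z}
      = {Z : Matrix (Fin q) (Fin p) ℂ |
          ((1 : Matrix (Fin p) (Fin p) ℂ) - Z.conjTranspose * Z).PosDef} :=
  supq_lower_factor_surjectivity_general p q
end

section
/- Let Φ be a finite reduced crystallographic root system with base Δ and positive roots Φ⁺, and let v = r_n ⋯ r_2 r_1 be a reduced expression of an element v of the Weyl group W, where r_j is the simple reflection associated to a simple root γ_j ∈ Δ. Define τ_j = (r_1 r_2 ⋯ r_{j−1})(γ_j) for j = 1, …, n. Then for each n, (1/2)·Σ_{β ∈ Φ⁺} ⟨β, τ_n^∨⟩ − 1 = Σ_{k=1}^{n−1} ⟨τ_k, τ_n^∨⟩, i.e. δ(h_{τ_n}) − 1 equals the sum over k < n of τ_k evaluated on the coroot of τ_n, where δ is the half-sum of the positive roots. -/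
open scoped RealInnerProductSpace

/-- The length of `w` as a word in the reflections attached (by `s`) to the simple roots
`Δ`. -/
noncomputable def wordLength {V : Type*} [NormedAddCommGroup V] [InnerProductSpace ℝ V]
    (s : V → (V ≃ₗ[ℝ] V)) (Δ : Finset V) (w : V ≃ₗ[ℝ] V) : ℕ :=
  sInf {m | ∃ l : List V, l.length = m ∧ (∀ γ ∈ l, γ ∈ Δ) ∧ (l.map s).prod = w}

/-!
Let `D = ∑ Φ⁺ = 2δ`. A simple reflection `r_γ` permutes `Φ⁺ \ {γ}` and sends `γ` to `-γ`, so
`r_γ D = D - 2γ`, i.e. `⟨D, γ^∨⟩ = 2`. For `u_j = r_1 ⋯ r_{j-1}` this telescopes to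
`D - u_j D = 2 ∑_{k<j} τ_k`. Pairing with `τ_j = u_j γ_j` and using that `u_j` is an isometry,
`(D, τ_j) = 2 ∑_{k<j} (τ_k, τ_j) + (D, γ_j) = 2 ∑_{k<j} (τ_k, τ_j) + (τ_j, τ_j)`.
-/

theorem sum_castLE_eq_sum_filter_lt {M : Type*} [AddCommMonoid M] {m : ℕ} (k : Fin m)
    (f : Fin m → M) :
    ∑ i : Fin k, f (Fin.castLE k.is_le' i) = ∑ i ∈ Finset.univ.filter (· < k), f i := by
  have hmap : Finset.univ.map (Fin.castLEEmb k.is_le') = Finset.univ.filter (· < k) := by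
    ext i
    simp only [Finset.mem_map, Finset.mem_univ, true_and, Finset.mem_filter, Fin.castLEEmb_apply]
    exact ⟨fun ⟨j, hj⟩ => hj ▸ j.2, fun h => ⟨⟨i, h⟩, rfl⟩⟩
  rw [← hmap, Finset.sum_map]
  rfl

section RootSystem

variable {V : Type*} [NormedAddCommGroup V] [InnerProductSpace ℝ V] {s : V → V ≃ₗ[ℝ] V}

theorem reflection_apply_self (hs : ∀ α x, s α x = x - (2 * ⟪x, α⟫ / ⟪α, α⟫) • α)
    {α : V} (hα : α ≠ 0) : s α α = -α := by
  rw [hs, mul_div_assoc, div_self (inner_self_ne_zero.mpr hα), mul_one, two_smul]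
  abel

theorem reflection_reflection (hs : ∀ α x, s α x = x - (2 * ⟪x, α⟫ / ⟪α, α⟫) • α)
    (α x : V) : s α (s α x) = x := by
  rcases eq_or_ne α 0 with rfl | hα
  · simp [hs]
  conv_lhs => rw [hs α x]
  rw [map_sub, map_smul, reflection_apply_self hs hα, hs, smul_neg, sub_neg_eq_add,
    sub_add_cancel]

theorem inner_reflection_reflection (hs : ∀ α x, s α x = x - (2 * ⟪x, α⟫ / ⟪α, α⟫) • α)
    (α x y : V) : ⟪s α x, s α y⟫ = ⟪x, y⟫ := by
  rcases eq_or_ne α 0 with rfl | hα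
  · simp [hs]
  have : ⟪α, α⟫ ≠ 0 := inner_self_ne_zero.mpr hα
  simp only [hs, inner_sub_left, inner_sub_right, real_inner_smul_left, real_inner_smul_right,
    real_inner_comm α]
  field_simp
  ring

theorem inner_eq_inner_self_of_reflection_apply
    (hs : ∀ α x, s α x = x - (2 * ⟪x, α⟫ / ⟪α, α⟫) • α) {α x : V} (hα : α ≠ 0)
    (h : s α x = x - (2 : ℝ) • α) : ⟪x, α⟫ = ⟪α, α⟫ := by
  rw [hs, sub_right_inj] at h
  have := smul_left_injective ℝ hα h
  field_simp at this
  linarith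

variable (s) in
def wordProd {m : ℕ} (g : Fin m → V) : V ≃ₗ[ℝ] V :=
  (List.ofFn fun i => s (g i)).prod

variable (s) in
/-- `wordRoot s g k = (r_{g 0} ⋯ r_{g (k-1)}) (g k)`, the root `τ_k` attached to the word `g`. -/
def wordRoot {m : ℕ} (g : Fin m → V) (k : Fin m) : V :=
  wordProd s (fun i : Fin k => g (Fin.castLE k.is_le' i)) (g k)

theorem wordProd_succ {m : ℕ} (g : Fin (m + 1) → V) :
    wordProd s g = s (g 0) * wordProd s (fun i => g i.succ) := by
  simp only [wordProd, List.ofFn_succ, List.prod_cons]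

theorem wordProd_castSucc {m : ℕ} (g : Fin (m + 1) → V) :
    wordProd s g = wordProd s (fun i => g i.castSucc) * s (g (Fin.last m)) := by
  simp only [wordProd, List.ofFn_succ', List.prod_concat]

theorem inner_wordProd_apply (hs : ∀ α x, s α x = x - (2 * ⟪x, α⟫ / ⟪α, α⟫) • α)
    {m : ℕ} (g : Fin m → V) (x y : V) : ⟪wordProd s g x, wordProd s g y⟫ = ⟪x, y⟫ := by
  induction m with
  | zero => rfl
  | succ m ih =>
    rw [wordProd_succ, LinearEquiv.mul_apply, LinearEquiv.mul_apply,
      inner_reflection_reflection hs, ih]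

theorem inner_wordRoot_self (hs : ∀ α x, s α x = x - (2 * ⟪x, α⟫ / ⟪α, α⟫) • α)
    {m : ℕ} (g : Fin m → V) (k : Fin m) :
    ⟪wordRoot s g k, wordRoot s g k⟫ = ⟪g k, g k⟫ :=
  inner_wordProd_apply hs _ _ _

theorem sub_wordProd_apply {m : ℕ} (g : Fin m → V) {D : V}
    (hD : ∀ i, s (g i) D = D - (2 : ℝ) • g i) :
    D - wordProd s g D = (2 : ℝ) • ∑ k, wordRoot s g k := by
  induction m with
  | zero => simp [wordProd]
  | succ m ih =>
    have hlast : wordRoot s g (Fin.last m) = wordProd s (fun i => g i.castSucc) (g (Fin.last m)) :=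
      rfl
    have hinit (i : Fin m) : wordRoot s g i.castSucc = wordRoot s (fun i => g i.castSucc) i := rfl
    rw [wordProd_castSucc, LinearEquiv.mul_apply, hD, map_sub, map_smul, Fin.sum_univ_castSucc,
      smul_add, hlast, Finset.sum_congr rfl fun i _ => hinit i, ← ih _ fun i => hD i.castSucc]
    abel

theorem inner_wordRoot (hs : ∀ α x, s α x = x - (2 * ⟪x, α⟫ / ⟪α, α⟫) • α)
    {m : ℕ} (g : Fin m → V) {D : V} (hD : ∀ i, s (g i) D = D - (2 : ℝ) • g i)
    {k : Fin m} (hk : g k ≠ 0) :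
    ⟪D, wordRoot s g k⟫ = 2 * ∑ i ∈ Finset.univ.filter (· < k), ⟪wordRoot s g i, wordRoot s g k⟫
      + ⟪wordRoot s g k, wordRoot s g k⟫ := by
  set P := wordProd s (fun i : Fin k => g (Fin.castLE k.is_le' i))
  have htel : D - P D = (2 : ℝ) • ∑ i ∈ Finset.univ.filter (· < k), wordRoot s g i := by
    rw [sub_wordProd_apply _ fun i => hD _, ← sum_castLE_eq_sum_filter_lt]
    rfl
  calc ⟪D, wordRoot s g k⟫ = ⟪D - P D, P (g k)⟫ + ⟪P D, P (g k)⟫ := by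
        rw [← inner_add_left, sub_add_cancel]; rfl
    _ = _ := by
        rw [htel, real_inner_smul_left, sum_inner, inner_wordProd_apply hs,
          inner_eq_inner_self_of_reflection_apply hs hk (hD k), ← inner_wordProd_apply hs _ (g k)]
        rfl

variable {Φ Δ Pos : Finset V}

theorem coeff_eq_of_sum_smul_eq
    (hind : LinearIndependent ℝ (Subtype.val : {x : V // x ∈ Δ} → V)) {c d : V → ℝ}
    (h : ∑ γ ∈ Δ, c γ • γ = ∑ γ ∈ Δ, d γ • γ) {x : V} (hx : x ∈ Δ) : c x = d x :=
  linearIndepOn_finset_iffₛ.mp (show LinearIndepOn ℝ id (Δ : Set V) from hind) c d h x hx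

theorem ne_zero_of_mem_base
    (hind : LinearIndependent ℝ (Subtype.val : {x : V // x ∈ Δ} → V)) {γ : V} (hγ : γ ∈ Δ) :
    γ ≠ 0 :=
  hind.ne_zero ⟨γ, hγ⟩

theorem sum_ite_smul_eq [DecidableEq V] {γ : V} (hγ : γ ∈ Δ) (a : ℝ) :
    ∑ x ∈ Δ, (if x = γ then a else 0) • x = a • γ := by
  simp [ite_smul, hγ]

theorem mem_pos_of_mem_base (hΔΦ : Δ ⊆ Φ)
    (hPos : ∀ α, α ∈ Pos ↔ α ∈ Φ ∧ ∃ c : V → ℝ, (∀ γ, 0 ≤ c γ) ∧ α = ∑ γ ∈ Δ, c γ • γ)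
    {γ : V} (hγ : γ ∈ Δ) : γ ∈ Pos := by
  classical
  refine (hPos γ).mpr ⟨hΔΦ hγ, fun x => if x = γ then 1 else 0,
    fun x => ite_nonneg zero_le_one le_rfl, ?_⟩
  rw [sum_ite_smul_eq hγ, one_smul]

theorem neg_notMem_pos (hind : LinearIndependent ℝ (Subtype.val : {x : V // x ∈ Δ} → V))
    (hPos : ∀ α, α ∈ Pos ↔ α ∈ Φ ∧ ∃ c : V → ℝ, (∀ γ, 0 ≤ c γ) ∧ α = ∑ γ ∈ Δ, c γ • γ)
    {γ : V} (hγ : γ ∈ Δ) : -γ ∉ Pos := by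
  classical
  intro hneg
  obtain ⟨-, c, hc, hrep⟩ := (hPos _).mp hneg
  have hcγ := coeff_eq_of_sum_smul_eq (d := fun x => if x = γ then -1 else 0) hind
    (by rw [← hrep, sum_ite_smul_eq hγ, neg_one_smul]) hγ
  rw [if_pos rfl] at hcγ
  linarith [hc γ]

theorem mem_pos_of_coeff_pos (hind : LinearIndependent ℝ (Subtype.val : {x : V // x ∈ Δ} → V))
    (hbase : ∀ α ∈ Φ,
      (∃ c : V → ℝ, (∀ γ, 0 ≤ c γ) ∧ α = ∑ γ ∈ Δ, c γ • γ) ∨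
      (∃ c : V → ℝ, (∀ γ, c γ ≤ 0) ∧ α = ∑ γ ∈ Δ, c γ • γ))
    (hPos : ∀ α, α ∈ Pos ↔ α ∈ Φ ∧ ∃ c : V → ℝ, (∀ γ, 0 ≤ c γ) ∧ α = ∑ γ ∈ Δ, c γ • γ)
    {α : V} (hα : α ∈ Φ) {c : V → ℝ} (hrep : α = ∑ γ ∈ Δ, c γ • γ) {δ : V} (hδ : δ ∈ Δ)
    (hcδ : 0 < c δ) : α ∈ Pos := by
  rcases hbase α hα with ⟨d, hd, hdrep⟩ | ⟨d, hd, hdrep⟩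
  · exact (hPos α).mpr ⟨hα, d, hd, hdrep⟩
  · have := coeff_eq_of_sum_smul_eq hind (hrep.symm.trans hdrep) hδ
    linarith [hd δ]

theorem exists_coeff_pos_of_ne (hΔΦ : Δ ⊆ Φ)
    (hred : ∀ α ∈ Φ, ∀ c : ℝ, c • α ∈ Φ → c = 1 ∨ c = -1)
    {β : V} (hβ : β ∈ Φ) {c : V → ℝ} (hc : ∀ γ, 0 ≤ c γ) (hrep : β = ∑ γ ∈ Δ, c γ • γ)
    {γ : V} (hγ : γ ∈ Δ) (hne : β ≠ γ) : ∃ δ ∈ Δ, δ ≠ γ ∧ 0 < c δ := by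
  by_contra! hzero
  have hβγ : β = c γ • γ := by
    rw [hrep, Finset.sum_eq_single_of_mem γ hγ fun δ hδ hδγ => ?_]
    rw [le_antisymm (hzero δ hδ hδγ) (hc δ), zero_smul]
  rcases hred γ (hΔΦ hγ) (c γ) (hβγ ▸ hβ) with h1 | h1
  · exact hne (by rw [hβγ, h1, one_smul])
  · linarith [hc γ]

theorem reflection_mem_pos (hs : ∀ α x, s α x = x - (2 * ⟪x, α⟫ / ⟪α, α⟫) • α)
    (hmap : ∀ α ∈ Φ, ∀ β ∈ Φ, s α β ∈ Φ)
    (hred : ∀ α ∈ Φ, ∀ c : ℝ, c • α ∈ Φ → c = 1 ∨ c = -1)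
    (hΔΦ : Δ ⊆ Φ) (hind : LinearIndependent ℝ (Subtype.val : {x : V // x ∈ Δ} → V))
    (hbase : ∀ α ∈ Φ,
      (∃ c : V → ℝ, (∀ γ, 0 ≤ c γ) ∧ α = ∑ γ ∈ Δ, c γ • γ) ∨
      (∃ c : V → ℝ, (∀ γ, c γ ≤ 0) ∧ α = ∑ γ ∈ Δ, c γ • γ))
    (hPos : ∀ α, α ∈ Pos ↔ α ∈ Φ ∧ ∃ c : V → ℝ, (∀ γ, 0 ≤ c γ) ∧ α = ∑ γ ∈ Δ, c γ • γ)
    {γ β : V} (hγ : γ ∈ Δ) (hβ : β ∈ Pos) (hne : β ≠ γ) : s γ β ∈ Pos := by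
  classical
  obtain ⟨hβΦ, c, hc, hrep⟩ := (hPos β).mp hβ
  obtain ⟨δ, hδ, hδγ, hcδ⟩ := exists_coeff_pos_of_ne hΔΦ hred hβΦ hc hrep hγ hne
  have hrep' : s γ β = ∑ x ∈ Δ, (c x - if x = γ then 2 * ⟪β, γ⟫ / ⟪γ, γ⟫ else 0) • x := by
    simp only [sub_smul, Finset.sum_sub_distrib, sum_ite_smul_eq hγ, ← hrep, hs]
  refine mem_pos_of_coeff_pos hind hbase hPos (hmap γ (hΔΦ hγ) β hβΦ) hrep' hδ ?_
  rwa [if_neg hδγ, sub_zero]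

theorem reflection_mem_erase [DecidableEq V] (hs : ∀ α x, s α x = x - (2 * ⟪x, α⟫ / ⟪α, α⟫) • α)
    (hmap : ∀ α ∈ Φ, ∀ β ∈ Φ, s α β ∈ Φ)
    (hred : ∀ α ∈ Φ, ∀ c : ℝ, c • α ∈ Φ → c = 1 ∨ c = -1)
    (hΔΦ : Δ ⊆ Φ) (hind : LinearIndependent ℝ (Subtype.val : {x : V // x ∈ Δ} → V))
    (hbase : ∀ α ∈ Φ,
      (∃ c : V → ℝ, (∀ γ, 0 ≤ c γ) ∧ α = ∑ γ ∈ Δ, c γ • γ) ∨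
      (∃ c : V → ℝ, (∀ γ, c γ ≤ 0) ∧ α = ∑ γ ∈ Δ, c γ • γ))
    (hPos : ∀ α, α ∈ Pos ↔ α ∈ Φ ∧ ∃ c : V → ℝ, (∀ γ, 0 ≤ c γ) ∧ α = ∑ γ ∈ Δ, c γ • γ)
    {γ β : V} (hγ : γ ∈ Δ) (hβ : β ∈ Pos.erase γ) : s γ β ∈ Pos.erase γ := by
  obtain ⟨hne, hβPos⟩ := Finset.mem_erase.mp hβ
  refine Finset.mem_erase.mpr ⟨fun h => neg_notMem_pos hind hPos hγ ?_,
    reflection_mem_pos hs hmap hred hΔΦ hind hbase hPos hγ hβPos hne⟩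
  rwa [← reflection_reflection hs γ β, h, reflection_apply_self hs (ne_zero_of_mem_base hind hγ)]
    at hβPos

theorem reflection_sum_pos (hs : ∀ α x, s α x = x - (2 * ⟪x, α⟫ / ⟪α, α⟫) • α)
    (hmap : ∀ α ∈ Φ, ∀ β ∈ Φ, s α β ∈ Φ)
    (hred : ∀ α ∈ Φ, ∀ c : ℝ, c • α ∈ Φ → c = 1 ∨ c = -1)
    (hΔΦ : Δ ⊆ Φ) (hind : LinearIndependent ℝ (Subtype.val : {x : V // x ∈ Δ} → V))
    (hbase : ∀ α ∈ Φ,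
      (∃ c : V → ℝ, (∀ γ, 0 ≤ c γ) ∧ α = ∑ γ ∈ Δ, c γ • γ) ∨
      (∃ c : V → ℝ, (∀ γ, c γ ≤ 0) ∧ α = ∑ γ ∈ Δ, c γ • γ))
    (hPos : ∀ α, α ∈ Pos ↔ α ∈ Φ ∧ ∃ c : V → ℝ, (∀ γ, 0 ≤ c γ) ∧ α = ∑ γ ∈ Δ, c γ • γ)
    {γ : V} (hγ : γ ∈ Δ) : s γ (∑ β ∈ Pos, β) = ∑ β ∈ Pos, β - (2 : ℝ) • γ := by
  classical
  have hγPos := mem_pos_of_mem_base hΔΦ hPos hγ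
  have hperm (β : V) (hβ : β ∈ Pos.erase γ) :=
    reflection_mem_erase hs hmap hred hΔΦ hind hbase hPos hγ hβ
  have hsum : ∑ β ∈ Pos.erase γ, s γ β = ∑ β ∈ Pos.erase γ, β :=
    Finset.sum_nbij' (s γ) (s γ) hperm hperm
      (fun β _ => reflection_reflection hs γ β) (fun β _ => reflection_reflection hs γ β)
      fun _ _ => rfl
  rw [map_sum, ← Finset.add_sum_erase Pos _ hγPos, ← Finset.add_sum_erase Pos (fun β => β) hγPos,
    hsum, reflection_apply_self hs (ne_zero_of_mem_base hind hγ), two_smul]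
  abel

end RootSystem

theorem half_sum_pairing_of_reduced_expression_general
    {V : Type*} [NormedAddCommGroup V] [InnerProductSpace ℝ V]
    -- `Φ` is a finite reduced crystallographic root system spanning `V`:
    (Φ : Finset V)
    (s : V → (V ≃ₗ[ℝ] V))
    (hs : ∀ α x, s α x = x - (2 * ⟪x, α⟫ / ⟪α, α⟫) • α)
    (hmap : ∀ α ∈ Φ, ∀ β ∈ Φ, s α β ∈ Φ)
    (hred : ∀ α ∈ Φ, ∀ c : ℝ, c • α ∈ Φ → c = 1 ∨ c = -1)
    -- `Δ` is a base of `Φ`, `Pos` the corresponding set of positive roots: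
    (Δ : Finset V) (hΔΦ : Δ ⊆ Φ)
    (hind : LinearIndependent ℝ (Subtype.val : {x : V // x ∈ Δ} → V))
    (hbase : ∀ α ∈ Φ,
      (∃ c : V → ℝ, (∀ γ, 0 ≤ c γ) ∧ α = ∑ γ ∈ Δ, c γ • γ) ∨
      (∃ c : V → ℝ, (∀ γ, c γ ≤ 0) ∧ α = ∑ γ ∈ Δ, c γ • γ))
    (Pos : Finset V)
    (hPos : ∀ α, α ∈ Pos ↔
      α ∈ Φ ∧ ∃ c : V → ℝ, (∀ γ, 0 ≤ c γ) ∧ α = ∑ γ ∈ Δ, c γ • γ)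
    -- `v = r_n ⋯ r_1` is a reduced expression, `r_j` the reflection of the simple root `γ_j`:
    (n : ℕ)
    (γ : Fin n → V) (hγ : ∀ j, γ j ∈ Δ)
    -- `τ_j = (r_1 r_2 ⋯ r_{j−1})(γ_j)`:
    (τ : Fin n → V)
    (hτ : ∀ j : Fin n,
      τ j = (List.ofFn fun i : Fin j.1 => s (γ ⟨i.1, i.2.trans j.2⟩)).prod (γ j)) :
    ∀ j : Fin n,
      (1 / 2) * (∑ β ∈ Pos, 2 * ⟪β, τ j⟫ / ⟪τ j, τ j⟫) - 1
        = ∑ k ∈ Finset.univ.filter (fun k : Fin n => k < j),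
            2 * ⟪τ k, τ j⟫ / ⟪τ j, τ j⟫ := by
  intro j
  obtain rfl : τ = wordRoot s γ := funext hτ
  have hD (i : Fin n) := reflection_sum_pos hs hmap hred hΔΦ hind hbase hPos (hγ i)
  have hγj : γ j ≠ 0 := ne_zero_of_mem_base hind (hγ j)
  have hτj : ⟪wordRoot s γ j, wordRoot s γ j⟫ ≠ 0 := by
    rw [inner_wordRoot_self hs]
    exact inner_self_ne_zero.mpr hγj
  rw [← Finset.sum_div, ← Finset.mul_sum, ← sum_inner, inner_wordRoot hs γ hD hγj,
    ← Finset.sum_div, ← Finset.mul_sum]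
  field_simp
  ring

/-- If `v = r_n ⋯ r_1` is a reduced expression in the Weyl group of a finite reduced
crystallographic root system, with `τ_j = (r_1 ⋯ r_{j−1})(γ_j)`, then for each `j`,
`δ(h_{τ_j}) − 1 = Σ_{k<j} ⟨τ_k, τ_j^∨⟩`, where `δ` is the half sum of the positive roots
and `⟨β, α^∨⟩ = 2(β,α)/(α,α)`. -/
theorem half_sum_pairing_of_reduced_expression
    {V : Type*} [NormedAddCommGroup V] [InnerProductSpace ℝ V] [FiniteDimensional ℝ V]
    -- `Φ` is a finite reduced crystallographic root system spanning `V`: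
    (Φ : Finset V) (hspan : Submodule.span ℝ (Φ : Set V) = ⊤) (h0 : (0 : V) ∉ Φ)
    (s : V → (V ≃ₗ[ℝ] V))
    (hs : ∀ α x, s α x = x - (2 * ⟪x, α⟫ / ⟪α, α⟫) • α)
    (hmap : ∀ α ∈ Φ, ∀ β ∈ Φ, s α β ∈ Φ)
    (hcrys : ∀ α ∈ Φ, ∀ β ∈ Φ, ∃ z : ℤ, 2 * ⟪β, α⟫ / ⟪α, α⟫ = (z : ℝ))
    (hred : ∀ α ∈ Φ, ∀ c : ℝ, c • α ∈ Φ → c = 1 ∨ c = -1)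
    -- `Δ` is a base of `Φ`, `Pos` the corresponding set of positive roots:
    (Δ : Finset V) (hΔΦ : Δ ⊆ Φ)
    (hind : LinearIndependent ℝ (Subtype.val : {x : V // x ∈ Δ} → V))
    (hbase : ∀ α ∈ Φ,
      (∃ c : V → ℝ, (∀ γ, 0 ≤ c γ) ∧ α = ∑ γ ∈ Δ, c γ • γ) ∨
      (∃ c : V → ℝ, (∀ γ, c γ ≤ 0) ∧ α = ∑ γ ∈ Δ, c γ • γ))
    (Pos : Finset V)
    (hPos : ∀ α, α ∈ Pos ↔
      α ∈ Φ ∧ ∃ c : V → ℝ, (∀ γ, 0 ≤ c γ) ∧ α = ∑ γ ∈ Δ, c γ • γ)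
    -- `v = r_n ⋯ r_1` is a reduced expression, `r_j` the reflection of the simple root `γ_j`:
    (v : V ≃ₗ[ℝ] V) (n : ℕ)
    (γ : Fin n → V) (hγ : ∀ j, γ j ∈ Δ)
    (hword : ((List.ofFn fun j => s (γ j)).reverse).prod = v)
    (hreduced : wordLength s Δ v = n)
    -- `τ_j = (r_1 r_2 ⋯ r_{j−1})(γ_j)`:
    (τ : Fin n → V)
    (hτ : ∀ j : Fin n,
      τ j = (List.ofFn fun i : Fin j.1 => s (γ ⟨i.1, i.2.trans j.2⟩)).prod (γ j)) :
    ∀ j : Fin n,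
      (1 / 2) * (∑ β ∈ Pos, 2 * ⟪β, τ j⟫ / ⟪τ j, τ j⟫) - 1
        = ∑ k ∈ Finset.univ.filter (fun k : Fin n => k < j),
            2 * ⟪τ k, τ j⟫ / ⟪τ j, τ j⟫ :=
  half_sum_pairing_of_reduced_expression_general Φ s hs hmap hred Δ hΔΦ hind hbase Pos hPos n γ hγ τ
    hτ
end

section
/- Let n ≥ 1, let σ be a permutation of {1, …, n}, and let S = {(i,j) : 1 ≤ i < j ≤ n, σ(i) > σ(j)} be its inversion set, with complement S^c = {(i,j) : i < j, σ(i) < σ(j)}. Let N be the group of n×n upper unitriangular complex matrices, N₁ = {u ∈ N : u_{ij} = 0 whenever i < j and (i,j) ∉ S}, and N₂ = {u ∈ N : u_{ij} = 0 whenever i < j and (i,j) ∉ S^c}. Then: (i) N₁ and N₂ are subgroups of N and every u ∈ N factors uniquely as u = (u)₁·(u)₂ with (u)₁ ∈ N₁ and (u)₂ ∈ N₂; and (ii) for every fixed u₀ ∈ N, the map N₁ → N₁ given by u ↦ (u₀·u·u₀⁻¹)₁ preserves the measure on N₁ obtained by transporting Lebesgue measure on ℂ^S through the entry coordinates (u_{ij})_{(i,j)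 ∈ S}. -/
/-! Grade the pairs `(i, j)`, `i < j`, by their height `j - i`. The factorization `u = u₁ u₂`
is built by recursion on height and is unique because `N₁ ∩ N₂ = 1`. Conjugation by a
unitriangular `u₀` followed by taking the first factor changes the entry of `u ∈ N₁` at `(i, j)`
only by a function of its entries of smaller height. In the coordinates `ℂ^S` the induced map
is therefore unipotent triangular, and such maps preserve Lebesgue measure. -/

open Matrix MeasureTheory

variable {n : ℕ}

/-- A matrix is upper unitriangular if it has 1's on the diagonal and 0's below it. -/
def IsUpperUnitriangular (u : Matrix (Fin n) (Fin n) ℂ) : Prop :=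
  (∀ i, u i i = 1) ∧ ∀ i j : Fin n, j < i → u i j = 0

/-- The inversion set of a permutation `σ`, as a finset of pairs `(i,j)`, `i < j`,
`σ i > σ j`. -/
def inversionSet (σ : Equiv.Perm (Fin n)) : Finset (Fin n × Fin n) :=
  Finset.univ.filter fun p => p.1 < p.2 ∧ σ p.2 < σ p.1

/-- The pattern subgroup `N₁`: upper unitriangular matrices supported on the inversion set. -/
def patternN₁ (σ : Equiv.Perm (Fin n)) : Set (Matrix (Fin n) (Fin n) ℂ) :=
  {u | IsUpperUnitriangular u ∧
    ∀ i j : Fin n, i < j → (i, j) ∉ inversionSet σ → u i j = 0}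

/-- The complementary pattern subgroup `N₂`: upper unitriangular matrices supported on the
complement of the inversion set. -/
def patternN₂ (σ : Equiv.Perm (Fin n)) : Set (Matrix (Fin n) (Fin n) ℂ) :=
  {u | IsUpperUnitriangular u ∧
    ∀ i j : Fin n, i < j → (i, j) ∈ inversionSet σ → u i j = 0}

/-- The entry coordinates on `N₁`: the unitriangular matrix with entries `x` on the inversion
set and `0` in the other off-diagonal positions. -/
noncomputable def coordMatrix (σ : Equiv.Perm (Fin n))
    (x : {p // p ∈ inversionSet σ} → ℂ) : Matrix (Fin n) (Fin n) ℂ :=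
  Matrix.of fun i j =>
    if i = j then 1 else if h : (i, j) ∈ inversionSet σ then x ⟨(i, j), h⟩ else 0

open Finset

def strictPattern (S : Finset (Fin n × Fin n)) : Submodule ℂ (Matrix (Fin n) (Fin n) ℂ) where
  carrier := {N | ∀ i j, ¬(i < j ∧ (i, j) ∈ S) → N i j = 0}
  add_mem' hN hM i j h := by simp [hN i j h, hM i j h]
  zero_mem' _ _ _ := rfl
  smul_mem' c N hN i j h := by simp [hN i j h]

def patternSet (S : Finset (Fin n × Fin n)) : Set (Matrix (Fin n) (Fin n) ℂ) :=
  {u | u - 1 ∈ strictPattern S}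

def IsClosedPattern (S : Finset (Fin n × Fin n)) : Prop :=
  ∀ ⦃i j k⦄, i < j → j < k → (i, j) ∈ S → (j, k) ∈ S → (i, k) ∈ S

section Pattern

variable {S : Finset (Fin n × Fin n)} {N M u v : Matrix (Fin n) (Fin n) ℂ}

theorem apply_eq_zero_of_mem_strictPattern (hN : N ∈ strictPattern S) {i j : Fin n}
    (hij : ¬i < j) : N i j = 0 :=
  hN i j fun h => hij h.1

theorem isClosedPattern_univ : IsClosedPattern (univ : Finset (Fin n × Fin n)) :=
  fun _ _ _ _ _ _ _ => mem_univ _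

theorem strictPattern_le_univ : strictPattern S ≤ strictPattern univ :=
  fun _ hN i j h => hN i j fun h' => h ⟨h'.1, mem_univ _⟩

theorem mul_mem_strictPattern (hS : IsClosedPattern S) (hN : N ∈ strictPattern S)
    (hM : M ∈ strictPattern S) : N * M ∈ strictPattern S := by
  intro i j hij
  refine (Matrix.mul_apply).trans (sum_eq_zero fun a _ => ?_)
  by_contra h
  obtain ⟨hia, haj⟩ := mul_ne_zero_iff.mp h
  obtain ⟨hia, hiaS⟩ := not_not.mp (mt (hN i a) hia)
  obtain ⟨haj, hajS⟩ := not_not.mp (mt (hM a j) haj)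
  exact hij ⟨hia.trans haj, hS hia haj hiaS hajS⟩

theorem pow_apply_eq_zero_of_mem_strictPattern (hN : N ∈ strictPattern S) :
    ∀ (m : ℕ) (i j : Fin n), (j : ℕ) < i + m → (N ^ m) i j = 0
  | 0, i, j, h => Matrix.one_apply_ne (by rintro rfl; omega)
  | m + 1, i, j, h => by
    rw [pow_succ, Matrix.mul_apply]
    refine sum_eq_zero fun a _ => ?_
    by_cases ha : (a : ℕ) < i + m
    · rw [pow_apply_eq_zero_of_mem_strictPattern hN m i a ha, zero_mul]
    · rw [apply_eq_zero_of_mem_strictPattern hN (by rw [Fin.lt_def]; omega), mul_zero]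

theorem pow_card_eq_zero_of_mem_strictPattern (hN : N ∈ strictPattern S) : N ^ n = 0 := by
  ext i j
  exact pow_apply_eq_zero_of_mem_strictPattern hN n i j (by omega)

theorem pow_succ_mem_strictPattern (hS : IsClosedPattern S) (hN : N ∈ strictPattern S) :
    ∀ m : ℕ, N ^ (m + 1) ∈ strictPattern S
  | 0 => by rwa [pow_one]
  | m + 1 => by
    rw [pow_succ]
    exact mul_mem_strictPattern hS (pow_succ_mem_strictPattern hS hN m) hN

theorem mem_patternSet : u ∈ patternSet S ↔ u - 1 ∈ strictPattern S :=
  Iff.rfl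

theorem mem_patternSet_iff : u ∈ patternSet S ↔
    IsUpperUnitriangular u ∧ ∀ i j : Fin n, i < j → (i, j) ∉ S → u i j = 0 := by
  refine ⟨fun hu => ⟨⟨fun i => ?_, fun i j hji => ?_⟩, fun i j hij hS => ?_⟩, ?_⟩
  · simpa [sub_eq_zero] using apply_eq_zero_of_mem_strictPattern hu (lt_irrefl i)
  · simpa [Matrix.one_apply_ne hji.ne'] using apply_eq_zero_of_mem_strictPattern hu hji.asymm
  · simpa [Matrix.one_apply_ne hij.ne] using hu i j fun h => hS h.2
  · rintro ⟨⟨hdiag, hlow⟩, hS⟩ i j hij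
    rcases lt_trichotomy i j with h | rfl | h
    · simp [Matrix.one_apply_ne h.ne, hS i j h fun hm => hij ⟨h, hm⟩]
    · simp [hdiag]
    · simp [Matrix.one_apply_ne h.ne', hlow i j h]

theorem mem_patternSet_univ_iff : u ∈ patternSet univ ↔ IsUpperUnitriangular u := by
  simp [mem_patternSet_iff]

theorem patternSet_subset_univ : patternSet S ⊆ patternSet univ :=
  fun _ hu => strictPattern_le_univ hu

theorem one_mem_patternSet : (1 : Matrix (Fin n) (Fin n) ℂ) ∈ patternSet S := by
  simp [patternSet]

theorem mul_mem_patternSet (hS : IsClosedPattern S) (hu : u ∈ patternSet S)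
    (hv : v ∈ patternSet S) : u * v ∈ patternSet S := by
  have : u * v - 1 = (u - 1) * (v - 1) + (u - 1) + (v - 1) := by noncomm_ring
  rw [mem_patternSet, this]
  exact add_mem (add_mem (mul_mem_strictPattern hS hu hv) hu) hv

theorem det_eq_one_of_mem_patternSet (hu : u ∈ patternSet S) : u.det = 1 := by
  have hu := (mem_patternSet_iff.mp hu).1
  rw [Matrix.det_of_isUpperTriangular fun i j hji => hu.2 i j hji]
  simp [hu.1]

theorem isUnit_det_of_mem_patternSet (hu : u ∈ patternSet S) : IsUnit u.det := by
  simp [det_eq_one_of_mem_patternSet hu]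

theorem inv_mem_patternSet (hS : IsClosedPattern S) (hu : u ∈ patternSet S) :
    u⁻¹ ∈ patternSet S := by
  have hN : 1 - u ∈ strictPattern S := by simpa using neg_mem (mem_patternSet.mp hu)
  have hNn : (1 - u) ^ (n + 1) = 0 := by
    rw [pow_succ, pow_card_eq_zero_of_mem_strictPattern hN, zero_mul]
  have hinv : u⁻¹ = ∑ m ∈ range (n + 1), (1 - u) ^ m := by
    refine Matrix.inv_eq_right_inv ?_
    simpa [hNn] using mul_neg_geom_sum (1 - u) (n + 1)
  rw [mem_patternSet, hinv, sum_range_succ', pow_zero, add_sub_cancel_right]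
  exact Submodule.sum_mem _ fun m _ => pow_succ_mem_strictPattern hS hN m

theorem exists_inverse_mem_patternSet (hS : IsClosedPattern S) (hu : u ∈ patternSet S) :
    ∃ v ∈ patternSet S, u * v = 1 ∧ v * u = 1 :=
  ⟨u⁻¹, inv_mem_patternSet hS hu, Matrix.mul_nonsing_inv u (isUnit_det_of_mem_patternSet hu),
    Matrix.nonsing_inv_mul u (isUnit_det_of_mem_patternSet hu)⟩

theorem eq_one_of_mem_patternSet_of_mem_compl (hu : u ∈ patternSet S)
    (hu' : u ∈ patternSet Sᶜ) : u = 1 := by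
  rw [← sub_eq_zero]
  ext i j
  by_cases h : (i, j) ∈ S
  · exact hu' i j fun h' => mem_compl.mp h'.2 h
  · exact hu i j fun h' => h h'.2

end Pattern

section Factorization

variable {S : Finset (Fin n × Fin n)} {N M u : Matrix (Fin n) (Fin n) ℂ}

theorem mul_apply_eq_sum_Ioo (hN : N ∈ strictPattern univ) (hM : M ∈ strictPattern univ)
    (i j : Fin n) : (N * M) i j = ∑ a ∈ Ioo i j, N i a * M a j := by
  rw [Matrix.mul_apply, ← sum_subset (subset_univ (Ioo i j))]
  intro a _ ha
  rcases not_and_or.mp (mem_Ioo.not.mp ha) with h | h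
  · rw [apply_eq_zero_of_mem_strictPattern hN h, zero_mul]
  · rw [apply_eq_zero_of_mem_strictPattern hM h, mul_zero]

/-- For `i < j`, `(u₁ * u₂) i j = u₁ i j + u₂ i j + ∑_{i<a<j} u₁ i a * u₂ a j` when `u₁ - 1` is
supported in `S` and `u₂ - 1` off `S`; at most one of the first two terms is nonzero, so this
determines the entries of the two factors recursively in `j - i`. -/
noncomputable def factorEntry (S : Finset (Fin n × Fin n)) (u : Matrix (Fin n) (Fin n) ℂ)
    (i j : Fin n) : ℂ :=
  u i j - ∑ a ∈ ((Ioo i j).filter fun a => (i, a) ∈ S ∧ (a, j) ∉ S).attach,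
    factorEntry S u i a * factorEntry S u a j
termination_by (j : ℕ) - i
decreasing_by
  all_goals
    have ha := mem_Ioo.mp (mem_filter.mp a.2).1
    rw [Fin.lt_def, Fin.lt_def] at ha
    omega

theorem factorEntry_eq (S : Finset (Fin n × Fin n)) (u : Matrix (Fin n) (Fin n) ℂ)
    (i j : Fin n) : factorEntry S u i j = u i j -
      ∑ a ∈ (Ioo i j).filter (fun a => (i, a) ∈ S ∧ (a, j) ∉ S),
        factorEntry S u i a * factorEntry S u a j := by
  rw [factorEntry, sum_attach _ fun a => factorEntry S u i a * factorEntry S u a j]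

def patternPart (T : Finset (Fin n × Fin n)) (c : Fin n → Fin n → ℂ) :
    Matrix (Fin n) (Fin n) ℂ :=
  Matrix.of fun i j => if i < j ∧ (i, j) ∈ T then c i j else 0

theorem patternPart_mem (T : Finset (Fin n × Fin n)) (c : Fin n → Fin n → ℂ) :
    patternPart T c ∈ strictPattern T := fun _ _ h => if_neg h

noncomputable def leftFactor (S : Finset (Fin n × Fin n)) (u : Matrix (Fin n) (Fin n) ℂ) :
    Matrix (Fin n) (Fin n) ℂ :=
  1 + patternPart S (factorEntry S u)

noncomputable def rightFactor (S : Finset (Fin n × Fin n)) (u : Matrix (Fin n) (Fin n) ℂ) :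
    Matrix (Fin n) (Fin n) ℂ :=
  1 + patternPart Sᶜ (factorEntry S u)

theorem leftFactor_mem (S : Finset (Fin n × Fin n)) (u : Matrix (Fin n) (Fin n) ℂ) :
    leftFactor S u ∈ patternSet S := by
  simpa [mem_patternSet, leftFactor] using patternPart_mem S (factorEntry S u)

theorem rightFactor_mem (S : Finset (Fin n × Fin n)) (u : Matrix (Fin n) (Fin n) ℂ) :
    rightFactor S u ∈ patternSet Sᶜ := by
  simpa [mem_patternSet, rightFactor] using patternPart_mem Sᶜ (factorEntry S u)

theorem leftFactor_apply_of_mem (S : Finset (Fin n × Fin n)) (u : Matrix (Fin n) (Fin n) ℂ)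
    {i j : Fin n} (hij : i < j) (h : (i, j) ∈ S) : leftFactor S u i j = factorEntry S u i j := by
  simp [leftFactor, patternPart, Matrix.one_apply_ne hij.ne, hij, h]

theorem leftFactor_mul_rightFactor (S : Finset (Fin n × Fin n)) (hu : u ∈ patternSet univ) :
    leftFactor S u * rightFactor S u = u := by
  set A := patternPart S (factorEntry S u)
  set B := patternPart Sᶜ (factorEntry S u)
  have hA : A ∈ strictPattern univ := strictPattern_le_univ (patternPart_mem _ _)
  have hB : B ∈ strictPattern univ := strictPattern_le_univ (patternPart_mem _ _)
  have hAB : A * B ∈ strictPattern univ := mul_mem_strictPattern isClosedPattern_univ hA hB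
  suffices h : A + B + A * B = u - 1 by
    rw [leftFactor, rightFactor, ← sub_eq_zero, ← sub_eq_zero.mpr h]
    noncomm_ring
  ext i j
  by_cases hij : i < j
  · have hsum : A i j + B i j = factorEntry S u i j := by
      by_cases h : (i, j) ∈ S <;> simp [A, B, patternPart, hij, h]
    rw [Matrix.add_apply, Matrix.add_apply, mul_apply_eq_sum_Ioo hA hB, Matrix.sub_apply,
      Matrix.one_apply_ne hij.ne, sub_zero, hsum, factorEntry_eq S u i j, sum_filter]
    have hterm : ∀ a ∈ Ioo i j, A i a * B a j =
        if (i, a) ∈ S ∧ (a, j) ∉ S then factorEntry S u i a * factorEntry S u a j else 0 := by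
      intro a ha
      obtain ⟨hia, haj⟩ := mem_Ioo.mp ha
      by_cases h₁ : (i, a) ∈ S <;> by_cases h₂ : (a, j) ∈ S <;>
        simp [A, B, patternPart, hia, haj, h₁, h₂]
    rw [sum_congr rfl hterm]
    ring
  · simp only [Matrix.add_apply, apply_eq_zero_of_mem_strictPattern hA hij,
      apply_eq_zero_of_mem_strictPattern hB hij, apply_eq_zero_of_mem_strictPattern hAB hij,
      apply_eq_zero_of_mem_strictPattern hu hij, add_zero]

theorem factorization_unique (hS : IsClosedPattern S) (hSc : IsClosedPattern Sᶜ)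
    {a a' b b' : Matrix (Fin n) (Fin n) ℂ} (ha : a ∈ patternSet S) (ha' : a' ∈ patternSet S)
    (hb : b ∈ patternSet Sᶜ) (hb' : b' ∈ patternSet Sᶜ) (h : a * b = a' * b') :
    a = a' ∧ b = b' := by
  have hda' := isUnit_det_of_mem_patternSet ha'
  have hdb := isUnit_det_of_mem_patternSet hb
  have hmid : a'⁻¹ * a = b' * b⁻¹ := by
    calc a'⁻¹ * a = a'⁻¹ * (a * b) * b⁻¹ := by
          rw [Matrix.mul_assoc a'⁻¹, Matrix.mul_nonsing_inv_cancel_right _ _ hdb]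
      _ = b' * b⁻¹ := by rw [h, Matrix.nonsing_inv_mul_cancel_left _ _ hda']
  have hone : a'⁻¹ * a = 1 := eq_one_of_mem_patternSet_of_mem_compl
    (mul_mem_patternSet hS (inv_mem_patternSet hS ha') ha)
    (hmid ▸ mul_mem_patternSet hSc hb' (inv_mem_patternSet hSc hb))
  have haa' : a = a' := by
    rw [← Matrix.mul_nonsing_inv_cancel_left a' a hda', hone, Matrix.mul_one]
  refine ⟨haa', ?_⟩
  rw [← Matrix.nonsing_inv_mul_cancel_left a b (isUnit_det_of_mem_patternSet ha), h, haa',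
    Matrix.nonsing_inv_mul_cancel_left _ _ hda']

theorem existsUnique_factorization (hS : IsClosedPattern S) (hSc : IsClosedPattern Sᶜ)
    (hu : u ∈ patternSet univ) :
    ∃! p : Matrix (Fin n) (Fin n) ℂ × Matrix (Fin n) (Fin n) ℂ,
      p.1 ∈ patternSet S ∧ p.2 ∈ patternSet Sᶜ ∧ u = p.1 * p.2 := by
  refine ⟨(leftFactor S u, rightFactor S u),
    ⟨leftFactor_mem S u, rightFactor_mem S u, (leftFactor_mul_rightFactor S hu).symm⟩, ?_⟩
  rintro ⟨a, b⟩ ⟨ha, hb, hab⟩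
  obtain ⟨rfl, rfl⟩ := factorization_unique hS hSc ha (leftFactor_mem S u) hb
    (rightFactor_mem S u) (hab.symm.trans (leftFactor_mul_rightFactor S hu).symm)
  rfl

end Factorization

section Height

variable {S : Finset (Fin n × Fin n)} {k : ℕ} {u v C D L R : Matrix (Fin n) (Fin n) ℂ}

def AgreeBelow (k : ℕ) (u v : Matrix (Fin n) (Fin n) ℂ) : Prop :=
  ∀ i j : Fin n, i < j → (j : ℕ) - i < k → u i j = v i j

theorem AgreeBelow.mono {l : ℕ} (h : AgreeBelow k u v) (hlk : l ≤ k) : AgreeBelow l u v :=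
  fun i j hij hl => h i j hij (by omega)

theorem factorEntry_congr (h : AgreeBelow k u v) (i j : Fin n) (hij : i < j)
    (hk : (j : ℕ) - i < k) : factorEntry S u i j = factorEntry S v i j := by
  rw [factorEntry_eq, factorEntry_eq, h i j hij hk]
  congr 1
  refine sum_congr rfl fun a ha => ?_
  obtain ⟨hia, haj⟩ := mem_Ioo.mp (mem_filter.mp ha).1
  have := Fin.lt_def.mp hia
  have := Fin.lt_def.mp haj
  rw [factorEntry_congr h i a hia (by omega), factorEntry_congr h a j haj (by omega)]
termination_by (j : ℕ) - i

theorem factorEntry_sub_apply_congr {i j : Fin n} (hij : i < j)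
    (h : AgreeBelow ((j : ℕ) - i) u v) :
    factorEntry S u i j - u i j = factorEntry S v i j - v i j := by
  rw [factorEntry_eq, factorEntry_eq, sub_sub_cancel_left, sub_sub_cancel_left]
  congr 1
  refine sum_congr rfl fun a ha => ?_
  obtain ⟨hia, haj⟩ := mem_Ioo.mp (mem_filter.mp ha).1
  have := Fin.lt_def.mp hia
  have := Fin.lt_def.mp haj
  rw [factorEntry_congr h i a hia (by omega), factorEntry_congr h a j haj (by omega)]

/-- The only term of `(L * (C - D) * R) i j` that can survive is `(C - D) i j`, since
`C - D` vanishes below height `j - i`. -/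
theorem conj_apply_sub_congr (hL : L ∈ patternSet univ) (hR : R ∈ patternSet univ)
    (hC : C ∈ patternSet univ) (hD : D ∈ patternSet univ) {i j : Fin n} (hij : i < j)
    (h : AgreeBelow ((j : ℕ) - i) C D) :
    (L * C * R) i j - C i j = (L * D * R) i j - D i j := by
  set E := C - D
  have hE : E ∈ strictPattern univ := by
    simpa [E] using sub_mem (mem_patternSet.mp hC) (mem_patternSet.mp hD)
  have hL' := mem_patternSet_univ_iff.mp hL
  have hR' := mem_patternSet_univ_iff.mp hR
  have hterm : ∀ a b, L i a * E a b * R b j ≠ 0 → a = i ∧ b = j := by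
    intro a b hne
    obtain ⟨⟨hLia, hEab⟩, hRbj⟩ := mul_ne_zero_iff.mp hne |>.imp_left mul_ne_zero_iff.mp
    have hia : ¬a < i := fun h' => hLia (hL'.2 i a h')
    have hbj : ¬j < b := fun h' => hRbj (hR'.2 b j h')
    have hab : a < b := by_contra fun h' => hEab (apply_eq_zero_of_mem_strictPattern hE h')
    have hgap : ¬(b : ℕ) - a < (j : ℕ) - i := fun h' => hEab (sub_eq_zero.mpr (h a b hab h'))
    simp only [not_lt, Fin.lt_def] at hia hbj hab
    exact ⟨Fin.ext (by omega), Fin.ext (by omega)⟩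
  have hLER : (L * E * R) i j = E i j := by
    rw [Matrix.mul_apply, Fintype.sum_eq_single j, Matrix.mul_apply, Finset.sum_mul,
      Fintype.sum_eq_single i, hL'.1, hR'.1, one_mul, mul_one]
    · exact fun a ha => by_contra fun hne => ha (hterm a j hne).1
    · intro b hb
      rw [Matrix.mul_apply, Finset.sum_mul]
      exact sum_eq_zero fun a _ => by_contra fun hne => hb (hterm a b hne).2
  have hconj : L * E * R = L * C * R - L * D * R := by
    simp only [E, Matrix.mul_sub, Matrix.sub_mul]
  rw [hconj, Matrix.sub_apply] at hLER
  linear_combination hLER + Matrix.sub_apply C D i j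

theorem AgreeBelow.conj (hL : L ∈ patternSet univ) (hR : R ∈ patternSet univ)
    (hC : C ∈ patternSet univ) (hD : D ∈ patternSet univ) (h : AgreeBelow k C D) :
    AgreeBelow k (L * C * R) (L * D * R) := by
  intro i j hij hk
  have := conj_apply_sub_congr hL hR hC hD hij (h.mono hk.le)
  rw [h i j hij hk] at this
  exact sub_left_inj.mp this

theorem continuous_factorEntry {X : Type*} [TopologicalSpace X]
    {g : X → Matrix (Fin n) (Fin n) ℂ} (hg : Continuous g) (i j : Fin n) :
    Continuous fun t => factorEntry S (g t) i j := by
  refine Continuous.congr ?_ fun t => (factorEntry_eq S (g t) i j).symm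
  refine (hg.matrix_elem i j).sub (continuous_finsetSum _ fun a ha => ?_)
  obtain ⟨hia, haj⟩ := mem_Ioo.mp (mem_filter.mp ha).1
  have := Fin.lt_def.mp hia
  have := Fin.lt_def.mp haj
  exact (continuous_factorEntry hg i a).mul (continuous_factorEntry hg a j)
termination_by (j : ℕ) - i

end Height

section Shear

variable {ι E : Type*} [Fintype ι] [AddGroup E] [MeasureSpace E] [MeasurableAdd₂ E]
  [SigmaFinite (volume : Measure E)] [(volume : Measure E).IsAddLeftInvariant]

theorem measurePreserving_of_skew_translation (P : ι → Prop) [DecidablePred P]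
    {F : (ι → E) → (ι → E)} {F' : ({p // P p} → E) → ({p // P p} → E)}
    {g : ({p // P p} → E) → ({p // ¬P p} → E)} (hF' : MeasurePreserving F' volume volume)
    (hg : Measurable g)
    (hFG : ∀ x, MeasurableEquiv.piEquivPiSubtypeProd (fun _ => E) P (F x) =
      (F' (MeasurableEquiv.piEquivPiSubtypeProd (fun _ => E) P x).1,
        g (MeasurableEquiv.piEquivPiSubtypeProd (fun _ => E) P x).1 +
          (MeasurableEquiv.piEquivPiSubtypeProd (fun _ => E) P x).2)) :
    MeasurePreserving F volume volume := by
  set e := MeasurableEquiv.piEquivPiSubtypeProd (fun _ => E) P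
  have he : MeasurePreserving e volume volume := volume_preserving_piEquivPiSubtypeProd _ _
  have hG : MeasurePreserving
      (fun ab : ({p // P p} → E) × ({p // ¬P p} → E) => (F' ab.1, g ab.1 + ab.2))
      volume volume :=
    hF'.skew_product (g := fun a b => g a + b) ((hg.comp measurable_fst).add measurable_snd)
      (ae_of_all _ fun a => map_add_left_eq_self volume (g a))
  rw [show F = e.symm ∘ (fun ab => (F' ab.1, g ab.1 + ab.2)) ∘ e from
    funext fun x => e.eq_symm_apply.mpr (hFG x)]
  exact (he.symm e).comp (hG.comp he)

/-- Induction on a bound `k` for the height `r`: the coordinates of height `k` are only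
translated, by an amount depending on the lower coordinates, so `F` is a skew product over its
restriction to the lower coordinates. -/
theorem measurePreserving_of_dependsOn_sub_self (r : ι → ℕ) {F : (ι → E) → (ι → E)}
    (hF : Measurable F) (hdep : ∀ p, DependsOn (fun x => F x p - x p) {q | r q < r p}) :
    MeasurePreserving F volume volume := by
  classical
  obtain ⟨k, hk⟩ : ∃ k, ∀ p, r p < k :=
    ⟨univ.sup r + 1, fun p => Nat.lt_succ_of_le (le_sup (mem_univ p))⟩
  induction k generalizing ι with
  | zero =>
    have : IsEmpty ι := ⟨fun p => absurd (hk p) (Nat.not_lt_zero _)⟩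
    rw [Subsingleton.elim F id]
    exact MeasurePreserving.id _
  | succ k ih =>
    set e := MeasurableEquiv.piEquivPiSubtypeProd (fun _ : ι => E) (fun p => r p < k)
    let Φ : ({p // r p < k} → E) → (ι → E) := fun a => e.symm (a, 0)
    have hΦ : Measurable Φ := e.symm.measurable.comp (measurable_id.prodMk measurable_const)
    have hΦ_lower : ∀ a q (hq : r q < k), Φ a q = a ⟨q, hq⟩ := fun a q hq => by
      simp [Φ, e, MeasurableEquiv.piEquivPiSubtypeProd, hq]
    have hΦ_upper : ∀ a q, ¬r q < k → Φ a q = 0 := fun a q hq => by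
      simp [Φ, e, MeasurableEquiv.piEquivPiSubtypeProd, hq]
    have hF' : MeasurePreserving (fun a (p : {p // r p < k}) => F (Φ a) p) volume volume := by
      refine ih (fun p => r p.1) (measurable_pi_lambda _ fun p =>
        (measurable_pi_apply p.1).comp (hF.comp hΦ)) (fun p a a' haa' => ?_) (fun p => p.2)
      have hlow : ∀ q ∈ {q | r q < r p.1}, Φ a q = Φ a' q := fun q hq => by
        rw [hΦ_lower a q (hq.trans p.2), hΦ_lower a' q (hq.trans p.2)]
        exact haa' ⟨q, _⟩ hq
      simpa only [← hΦ_lower _ _ p.2] using hdep p.1 hlow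
    refine measurePreserving_of_skew_translation _ hF'
      (measurable_pi_lambda _ fun p => (measurable_pi_apply p.1).comp (hF.comp hΦ)) fun x => ?_
    have hF_eq : ∀ p, F x p = F (Φ (e x).1) p - Φ (e x).1 p + x p := fun p => by
      have hlow : ∀ q ∈ {q | r q < r p}, x q = Φ (e x).1 q := fun q hq => by
        rw [hΦ_lower _ q (hq.trans_le (Nat.lt_succ_iff.mp (hk p)))]
        rfl
      rw [← show F x p - x p = F (Φ (e x).1) p - Φ (e x).1 p from hdep p hlow, sub_add_cancel]
    refine Prod.ext (funext fun p => ?_) (funext fun p => ?_)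
    · change F x p = F (Φ (e x).1) p
      rw [hF_eq, hΦ_lower _ _ p.2]
      exact sub_add_cancel _ _
    · change F x p = F (Φ (e x).1) p + x p
      rw [hF_eq, hΦ_upper _ _ p.2, sub_zero]

end Shear

section Inversions

variable (σ : Equiv.Perm (Fin n))

theorem mem_inversionSet {p : Fin n × Fin n} :
    p ∈ inversionSet σ ↔ p.1 < p.2 ∧ σ p.2 < σ p.1 := by
  simp [inversionSet]

theorem isClosedPattern_inversionSet : IsClosedPattern (inversionSet σ) := by
  intro i j k hij hjk h₁ h₂
  rw [mem_inversionSet] at *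
  exact ⟨hij.trans hjk, h₂.2.trans h₁.2⟩

theorem isClosedPattern_compl_inversionSet : IsClosedPattern (inversionSet σ)ᶜ := by
  have hσ : ∀ {i j}, i < j → (i, j) ∈ (inversionSet σ)ᶜ → σ i < σ j := fun hij h => by
    simp only [mem_compl, mem_inversionSet, not_and, not_lt] at h
    exact (h hij).lt_of_ne (σ.injective.ne hij.ne)
  intro i j k hij hjk h₁ h₂
  simpa [mem_inversionSet] using fun _ => ((hσ hij h₁).trans (hσ hjk h₂)).le

theorem patternN₁_eq : patternN₁ σ = patternSet (inversionSet σ) := by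
  ext u
  rw [mem_patternSet_iff]
  rfl

theorem patternN₂_eq : patternN₂ σ = patternSet (inversionSet σ)ᶜ := by
  ext u
  simp [patternN₂, mem_patternSet_iff]

end Inversions

section Coordinates

variable {σ : Equiv.Perm (Fin n)}

theorem coordMatrix_apply_of_mem (x : {p // p ∈ inversionSet σ} → ℂ) {p : Fin n × Fin n}
    (hp : p ∈ inversionSet σ) : coordMatrix σ x p.1 p.2 = x ⟨p, hp⟩ := by
  simp [coordMatrix, ((mem_inversionSet σ).mp hp).1.ne, hp]

theorem coordMatrix_mem_patternSet (x : {p // p ∈ inversionSet σ} → ℂ) :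
    coordMatrix σ x ∈ patternSet (inversionSet σ) := by
  intro i j hij
  by_cases hp : (i, j) ∈ inversionSet σ
  · exact absurd ⟨((mem_inversionSet σ).mp hp).1, hp⟩ hij
  · by_cases h : i = j <;> simp [coordMatrix, h, hp]

theorem continuous_coordMatrix : Continuous (coordMatrix σ) :=
  continuous_matrix fun i j => by
    by_cases hp : (i, j) ∈ inversionSet σ
    · simpa only [coordMatrix_apply_of_mem _ hp] using continuous_apply _
    · by_cases h : i = j <;> simp [coordMatrix, h, hp, continuous_const]

theorem coordMatrix_agreeBelow {k : ℕ} {x y : {p // p ∈ inversionSet σ} → ℂ}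
    (h : ∀ q : {p // p ∈ inversionSet σ}, (q.1.2 : ℕ) - q.1.1 < k → x q = y q) :
    AgreeBelow k (coordMatrix σ x) (coordMatrix σ y) := by
  intro i j hij hk
  by_cases hp : (i, j) ∈ inversionSet σ
  · rw [coordMatrix_apply_of_mem x hp, coordMatrix_apply_of_mem y hp]
    exact h _ hk
  · simp [coordMatrix, hij.ne, hp]

theorem eq_factorEntry_of_eq_coordMatrix_mul {M v : Matrix (Fin n) (Fin n) ℂ}
    {x : {p // p ∈ inversionSet σ} → ℂ} (hM : M ∈ patternSet univ)
    (hv : v ∈ patternSet (inversionSet σ)ᶜ) (h : M = coordMatrix σ x * v)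
    (p : {p // p ∈ inversionSet σ}) : x p = factorEntry (inversionSet σ) M p.1.1 p.1.2 := by
  obtain ⟨hx, -⟩ := factorization_unique (isClosedPattern_inversionSet σ)
    (isClosedPattern_compl_inversionSet σ) (coordMatrix_mem_patternSet x)
    (leftFactor_mem _ M) hv (rightFactor_mem _ M)
    (h.symm.trans (leftFactor_mul_rightFactor _ hM).symm)
  have hp := (mem_inversionSet σ).mp p.2
  rw [← coordMatrix_apply_of_mem x p.2, hx, leftFactor_apply_of_mem _ _ hp.1 p.2]

theorem measurePreserving_of_conj_eq_coordMatrix_mul {u₀ : Matrix (Fin n) (Fin n) ℂ}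
    (hu₀ : u₀ ∈ patternSet univ)
    {F : ({p // p ∈ inversionSet σ} → ℂ) → ({p // p ∈ inversionSet σ} → ℂ)}
    (hF : ∀ x, ∃ v ∈ patternSet (inversionSet σ)ᶜ,
      u₀ * coordMatrix σ x * u₀⁻¹ = coordMatrix σ (F x) * v) :
    MeasurePreserving F volume volume := by
  set M := fun x => u₀ * coordMatrix σ x * u₀⁻¹
  have hu₀' := inv_mem_patternSet isClosedPattern_univ hu₀
  have hC : ∀ x, coordMatrix σ x ∈ patternSet univ :=
    fun x => patternSet_subset_univ (coordMatrix_mem_patternSet x)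
  have hM : ∀ x, M x ∈ patternSet univ := fun x =>
    mul_mem_patternSet isClosedPattern_univ (mul_mem_patternSet isClosedPattern_univ hu₀ (hC x))
      hu₀'
  have hFM : F = fun x p => factorEntry (inversionSet σ) (M x) p.1.1 p.1.2 := by
    funext x p
    obtain ⟨v, hv, h⟩ := hF x
    exact eq_factorEntry_of_eq_coordMatrix_mul (hM x) hv h p
  have hMc : Continuous M :=
    (continuous_const.matrix_mul continuous_coordMatrix).matrix_mul continuous_const
  refine measurePreserving_of_dependsOn_sub_self (fun q => (q.1.2 : ℕ) - q.1.1)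
    (hFM ▸ (continuous_pi fun p => continuous_factorEntry hMc _ _).measurable)
    fun p x y hxy => ?_
  have hp := (mem_inversionSet σ).mp p.2
  have hCxy := coordMatrix_agreeBelow hxy
  have h₁ := factorEntry_sub_apply_congr (S := inversionSet σ) hp.1
    (hCxy.conj hu₀ hu₀' (hC x) (hC y))
  have h₂ := conj_apply_sub_congr hu₀ hu₀' (hC x) (hC y) hp.1 hCxy
  rw [coordMatrix_apply_of_mem x p.2, coordMatrix_apply_of_mem y p.2] at h₂
  simp only [hFM]
  linear_combination h₁ + h₂

end Coordinates

theorem pattern_subgroup_factorization_and_measure_preservation_general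
    (σ : Equiv.Perm (Fin n)) :
    ((1 : Matrix (Fin n) (Fin n) ℂ) ∈ patternN₁ σ ∧
      (∀ u ∈ patternN₁ σ, ∀ v ∈ patternN₁ σ, u * v ∈ patternN₁ σ) ∧
      (∀ u ∈ patternN₁ σ, ∃ v ∈ patternN₁ σ, u * v = 1 ∧ v * u = 1)) ∧
    ((1 : Matrix (Fin n) (Fin n) ℂ) ∈ patternN₂ σ ∧
      (∀ u ∈ patternN₂ σ, ∀ v ∈ patternN₂ σ, u * v ∈ patternN₂ σ) ∧
      (∀ u ∈ patternN₂ σ, ∃ v ∈ patternN₂ σ, u * v = 1 ∧ v * u = 1)) ∧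
    (∀ u : Matrix (Fin n) (Fin n) ℂ, IsUpperUnitriangular u →
      ∃! p : Matrix (Fin n) (Fin n) ℂ × Matrix (Fin n) (Fin n) ℂ,
        p.1 ∈ patternN₁ σ ∧ p.2 ∈ patternN₂ σ ∧ u = p.1 * p.2) ∧
    (∀ u₀ : Matrix (Fin n) (Fin n) ℂ, IsUpperUnitriangular u₀ →
      ∀ F : ({p // p ∈ inversionSet σ} → ℂ) → ({p // p ∈ inversionSet σ} → ℂ),
        (∀ x, ∃ v ∈ patternN₂ σ,
          u₀ * coordMatrix σ x * u₀⁻¹ = coordMatrix σ (F x) * v) →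
        Measure.map F volume = volume) := by
  have hS := isClosedPattern_inversionSet σ
  have hSc := isClosedPattern_compl_inversionSet σ
  simp only [patternN₁_eq, patternN₂_eq, ← mem_patternSet_univ_iff]
  exact ⟨⟨one_mem_patternSet, fun _ hu _ hv => mul_mem_patternSet hS hu hv,
      fun _ => exists_inverse_mem_patternSet hS⟩,
    ⟨one_mem_patternSet, fun _ hu _ hv => mul_mem_patternSet hSc hu hv,
      fun _ => exists_inverse_mem_patternSet hSc⟩,
    fun u hu => existsUnique_factorization hS hSc hu,
    fun u₀ hu₀ F hF => (measurePreserving_of_conj_eq_coordMatrix_mul hu₀ hF).map_eq⟩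

/-- (i) `N₁` and `N₂` are subgroups of the group `N` of upper unitriangular matrices and every
`u ∈ N` factors uniquely as `u = u₁·u₂` with `u₁ ∈ N₁`, `u₂ ∈ N₂`; (ii) for any `u₀ ∈ N`, the
induced map `u ↦ (u₀·u·u₀⁻¹)₁` of `N₁` preserves Lebesgue measure in the entry coordinates
indexed by the inversion set. -/
theorem pattern_subgroup_factorization_and_measure_preservation
    (hn : 1 ≤ n) (σ : Equiv.Perm (Fin n)) :
    ((1 : Matrix (Fin n) (Fin n) ℂ) ∈ patternN₁ σ ∧
      (∀ u ∈ patternN₁ σ, ∀ v ∈ patternN₁ σ, u * v ∈ patternN₁ σ) ∧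
      (∀ u ∈ patternN₁ σ, ∃ v ∈ patternN₁ σ, u * v = 1 ∧ v * u = 1)) ∧
    ((1 : Matrix (Fin n) (Fin n) ℂ) ∈ patternN₂ σ ∧
      (∀ u ∈ patternN₂ σ, ∀ v ∈ patternN₂ σ, u * v ∈ patternN₂ σ) ∧
      (∀ u ∈ patternN₂ σ, ∃ v ∈ patternN₂ σ, u * v = 1 ∧ v * u = 1)) ∧
    (∀ u : Matrix (Fin n) (Fin n) ℂ, IsUpperUnitriangular u →
      ∃! p : Matrix (Fin n) (Fin n) ℂ × Matrix (Fin n) (Fin n) ℂ,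
        p.1 ∈ patternN₁ σ ∧ p.2 ∈ patternN₂ σ ∧ u = p.1 * p.2) ∧
    (∀ u₀ : Matrix (Fin n) (Fin n) ℂ, IsUpperUnitriangular u₀ →
      ∀ F : ({p // p ∈ inversionSet σ} → ℂ) → ({p // p ∈ inversionSet σ} → ℂ),
        (∀ x, ∃ v ∈ patternN₂ σ,
          u₀ * coordMatrix σ x * u₀⁻¹ = coordMatrix σ (F x) * v) →
        Measure.map F volume = volume) :=
  pattern_subgroup_factorization_and_measure_preservation_general σ
end

section
/- Let n ≥ 1, let a be an invertible diagonal n×n complex matrix with diagonal entries a₁, …, a_n, and let u be an upper unitriangular n×n complex matrix. Let V be the real vector space of strictly lower triangular n×n complex matrices and let π₋ : M_n(ℂ) → V be the projection sending a matrix to its strictly lower triangular part. Then the ℝ-linear endomorphism of V given by X ↦ π₋((a·u)·X·(a·u)⁻¹) has determinant ∏_{1 ≤ i < j ≤ n} |a_j / a_i|². -/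
/-!
For upper triangular `B` and `C`, the entry `(B X C) i j = ∑ B i k * X k l * C l j` only involves
entries `X k l` with `i ≤ k` and `l ≤ j`, that is, positions of height `k - l` at least `i - j`,
and of equal height only at `(i, j)` itself. So in the complex coordinates `(X i j)_{j < i}` the map
`X ↦ π₋(B X C)` is a triangular complex matrix with diagonal entries `B i i * C j j`; for
`B = a u` and `C = B⁻¹` these are `a i / a j`. Being `ℂ`-linear, the map has real determinant
`|det|²`.
-/

open Matrix

/-- The real subspace of strictly lower triangular n×n complex matrices. -/
noncomputable def strictlyLowerTriangular (n : ℕ) : Submodule ℝ (Matrix (Fin n) (Fin n) ℂ) where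
  carrier := {X | ∀ i j : Fin n, i ≤ j → X i j = 0}
  add_mem' := by
    intro X Y hX hY i j hij
    simp [Matrix.add_apply, hX i j hij, hY i j hij]
  zero_mem' := by intro i j _; rfl
  smul_mem' := by
    intro c X hX i j hij
    simp [Matrix.smul_apply, hX i j hij]

namespace Matrix

variable {m R : Type*} [Fintype m]

theorem BlockTriangular.det_of_injective [DecidableEq m] [CommRing R] {α : Type*} [LinearOrder α]
    {M : Matrix m m R} {b : m → α} (hM : M.BlockTriangular b) (hb : Function.Injective b) :
    M.det = ∏ i, M i i := by
  let : LinearOrder m := LinearOrder.lift' b hb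
  exact det_of_isUpperTriangular fun _ _ h => hM h

variable [LinearOrder m]

theorem IsUpperTriangular.mul_apply_self [NonUnitalNonAssocSemiring R] {M N : Matrix m m R}
    (hM : M.IsUpperTriangular) (hN : N.IsUpperTriangular) (i : m) :
    (M * N) i i = M i i * N i i := by
  rw [mul_apply, Finset.sum_eq_single i]
  · intro k _ hk
    rcases hk.lt_or_gt with h | h
    · rw [hM h, zero_mul]
    · rw [hN h, mul_zero]
  · simp

theorem IsUpperTriangular.inv [DecidableEq m] [CommRing R] {M : Matrix m m R}
    (hM : M.IsUpperTriangular) : M⁻¹.IsUpperTriangular := by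
  by_cases h : IsUnit M.det
  · have := M.invertibleOfIsUnitDet h
    exact blockTriangular_inv_of_blockTriangular hM
  · rw [nonsing_inv_apply_not_isUnit M h]
    exact blockTriangular_zero

theorem IsUpperTriangular.inv_apply_self [DecidableEq m] [Field R] {M : Matrix m m R}
    (hM : M.IsUpperTriangular) (hdet : M.det ≠ 0) (i : m) : M⁻¹ i i = (M i i)⁻¹ := by
  have h := congr_fun₂ (mul_nonsing_inv M (isUnit_iff_ne_zero.2 hdet)) i i
  rw [hM.mul_apply_self hM.inv, one_apply_eq] at h
  exact eq_inv_of_mul_eq_one_right h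

end Matrix

abbrev LowerIndex (n : ℕ) := {p : Fin n × Fin n // p.2 < p.1}

namespace LowerIndex

variable {n : ℕ}

theorem prod_eq_prod_filter {M : Type*} [CommMonoid M] (f : Fin n → Fin n → M) :
    ∏ p : LowerIndex n, f p.1.1 p.1.2
      = ∏ p ∈ Finset.univ.filter (fun p : Fin n × Fin n => p.1 < p.2), f p.2 p.1 := by
  rw [Finset.prod_subtype (p := fun p : Fin n × Fin n => p.1 < p.2) _ (fun _ => by simp)]
  exact ((Equiv.prodComm _ _).subtypeEquiv fun _ => Iff.rfl).prod_comp
    fun p : {p : Fin n × Fin n // p.1 < p.2} => f p.1.2 p.1.1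

def heightLex (p : LowerIndex n) : ℕ ×ₗ ℕ := toLex ((p.1.1 : ℕ) - p.1.2, (p.1.1 : ℕ))

theorem heightLex_injective : Function.Injective (heightLex (n := n)) := by
  rintro ⟨⟨i, j⟩, hp⟩ ⟨⟨k, l⟩, hq⟩ h
  simp only [heightLex, toLex_inj, Prod.mk.injEq] at h
  simp only [Fin.lt_def] at hp hq
  ext <;> simp only <;> omega

end LowerIndex

namespace strictlyLowerTriangular

variable {n : ℕ}

noncomputable def lowerCoords (n : ℕ) : strictlyLowerTriangular n ≃ₗ[ℝ] (LowerIndex n → ℂ) where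
  toFun X p := (X : Matrix (Fin n) (Fin n) ℂ) p.1.1 p.1.2
  map_add' _ _ := rfl
  map_smul' _ _ := rfl
  invFun v := ⟨of fun i j => if h : j < i then v ⟨(i, j), h⟩ else 0,
    fun _ _ hij => dif_neg hij.not_gt⟩
  left_inv X := by
    ext i j
    by_cases h : j < i
    · simp [h]
    · simp [h, X.2 i j (not_lt.1 h)]
  right_inv v := by
    funext p
    simp [p.2]

theorem mul_coe_mul_apply (B C : Matrix (Fin n) (Fin n) ℂ) (X : strictlyLowerTriangular n)
    (i j : Fin n) :
    (B * (X : Matrix (Fin n) (Fin n) ℂ) * C) i j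
      = ∑ q : LowerIndex n, B i q.1.1 * C q.1.2 j * (X : Matrix (Fin n) (Fin n) ℂ) q.1.1 q.1.2 := by
  have hsum : (B * (X : Matrix (Fin n) (Fin n) ℂ) * C) i j
      = ∑ q : Fin n × Fin n, B i q.1 * C q.2 j * (X : Matrix (Fin n) (Fin n) ℂ) q.1 q.2 := by
    simp only [mul_apply, Finset.sum_mul, Fintype.sum_prod_type]
    rw [Finset.sum_comm]
    exact Finset.sum_congr rfl fun _ _ => Finset.sum_congr rfl fun _ _ => by ring
  rw [hsum, ← Finset.sum_subtype _ (fun _ => Finset.mem_filter_univ _)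
    fun q : Fin n × Fin n => B i q.1 * C q.2 j * (X : Matrix (Fin n) (Fin n) ℂ) q.1 q.2,
    Finset.sum_filter_of_ne]
  intro q _ hq
  by_contra h
  exact hq (by rw [X.2 _ _ (not_lt.1 h), mul_zero])

theorem lowerCoords_apply (X : strictlyLowerTriangular n) (p : LowerIndex n) :
    lowerCoords n X p = (X : Matrix (Fin n) (Fin n) ℂ) p.1.1 p.1.2 :=
  rfl

theorem lowerCoords_symm_apply_of_lt (v : LowerIndex n → ℂ) {i j : Fin n} (h : j < i) :
    ((lowerCoords n).symm v : Matrix (Fin n) (Fin n) ℂ) i j = v ⟨(i, j), h⟩ :=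
  dif_pos h

end strictlyLowerTriangular

open strictlyLowerTriangular

section LowerSandwich

variable {n : ℕ}

noncomputable def lowerSandwichMatrix (B C : Matrix (Fin n) (Fin n) ℂ) :
    Matrix (LowerIndex n) (LowerIndex n) ℂ :=
  of fun p q => B p.1.1 q.1.1 * C q.1.2 p.1.2

theorem lowerCoords_comp_comp_symm_eq_toLin' {B C : Matrix (Fin n) (Fin n) ℂ}
    {T : strictlyLowerTriangular n →ₗ[ℝ] strictlyLowerTriangular n}
    (hT : ∀ X : strictlyLowerTriangular n, ∀ i j : Fin n, j < i →
      (T X : Matrix (Fin n) (Fin n) ℂ) i j = (B * X * C) i j) :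
    (lowerCoords n : _ →ₗ[ℝ] _) ∘ₗ T ∘ₗ ((lowerCoords n).symm : _ →ₗ[ℝ] _)
      = (toLin' (lowerSandwichMatrix B C)).restrictScalars ℝ := by
  refine LinearMap.ext fun v => funext fun p => ?_
  simp only [LinearMap.comp_apply, LinearEquiv.coe_coe]
  rw [lowerCoords_apply, hT _ _ _ p.2, mul_coe_mul_apply]
  refine Finset.sum_congr rfl fun q _ => ?_
  rw [lowerCoords_symm_apply_of_lt v q.2]
  rfl

theorem det_eq_normSq_det_lowerSandwichMatrix {B C : Matrix (Fin n) (Fin n) ℂ}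
    {T : strictlyLowerTriangular n →ₗ[ℝ] strictlyLowerTriangular n}
    (hT : ∀ X : strictlyLowerTriangular n, ∀ i j : Fin n, j < i →
      (T X : Matrix (Fin n) (Fin n) ℂ) i j = (B * X * C) i j) :
    LinearMap.det T = Complex.normSq (lowerSandwichMatrix B C).det := by
  rw [← LinearMap.det_conj T (lowerCoords n), lowerCoords_comp_comp_symm_eq_toLin' hT,
    LinearMap.det_restrictScalars, LinearMap.det_toLin', Algebra.norm_complex_apply]

theorem blockTriangular_lowerSandwichMatrix {B C : Matrix (Fin n) (Fin n) ℂ}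
    (hB : B.IsUpperTriangular) (hC : C.IsUpperTriangular) :
    (lowerSandwichMatrix B C).BlockTriangular LowerIndex.heightLex := by
  rintro ⟨⟨i, j⟩, hp⟩ ⟨⟨k, l⟩, hq⟩ h
  simp only [lowerSandwichMatrix, of_apply]
  by_cases hik : k < i
  · rw [hB hik, zero_mul]
  by_cases hjl : j < l
  · rw [hC hjl, mul_zero]
  simp only [LowerIndex.heightLex, Prod.Lex.toLex_lt_toLex] at h
  simp only [Fin.lt_def, not_lt] at hp hq hik hjl
  omega

theorem det_lowerSandwichMatrix {B C : Matrix (Fin n) (Fin n) ℂ}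
    (hB : B.IsUpperTriangular) (hC : C.IsUpperTriangular) :
    (lowerSandwichMatrix B C).det = ∏ p : LowerIndex n, B p.1.1 p.1.1 * C p.1.2 p.1.2 :=
  (blockTriangular_lowerSandwichMatrix hB hC).det_of_injective LowerIndex.heightLex_injective

end LowerSandwich

/-- Let `a` be an invertible diagonal matrix with entries `a₁, …, a_n` and `u` upper
unitriangular.  Any ℝ-linear endomorphism `T` of the space `V` of strictly lower triangular
matrices which agrees below the diagonal with `X ↦ (a·u)·X·(a·u)⁻¹` (i.e. `T = π₋ ∘ Ad_{au}`)
has determinant `∏_{i<j} |a_j/a_i|²`. -/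
theorem det_of_projected_conjugation
    (n : ℕ) (a : Fin n → ℂ) (ha : ∀ i, a i ≠ 0)
    (u : Matrix (Fin n) (Fin n) ℂ)
    (hu_diag : ∀ i, u i i = 1) (hu_low : ∀ i j : Fin n, j < i → u i j = 0)
    (T : strictlyLowerTriangular n →ₗ[ℝ] strictlyLowerTriangular n)
    (hT : ∀ X : strictlyLowerTriangular n, ∀ i j : Fin n, j < i →
      (T X : Matrix (Fin n) (Fin n) ℂ) i j
        = ((Matrix.diagonal a * u) * (X : Matrix (Fin n) (Fin n) ℂ)
            * (Matrix.diagonal a * u)⁻¹) i j) :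
    LinearMap.det T
      = ∏ p ∈ Finset.univ.filter (fun p : Fin n × Fin n => p.1 < p.2),
          ‖a p.2 / a p.1‖ ^ 2 := by
  set A := diagonal a * u
  have hA : A.IsUpperTriangular := (blockTriangular_diagonal a).mul fun i j h => hu_low i j h
  have hA_diag : ∀ i, A i i = a i := fun i => by simp [A, hu_diag]
  have hA_det : A.det ≠ 0 := by
    rw [det_of_isUpperTriangular hA, Finset.prod_ne_zero_iff]
    exact fun i _ => hA_diag i ▸ ha i
  rw [det_eq_normSq_det_lowerSandwichMatrix hT, det_lowerSandwichMatrix hA hA.inv, map_prod,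
    ← LowerIndex.prod_eq_prod_filter fun i j => ‖a i / a j‖ ^ 2]
  refine Finset.prod_congr rfl fun p _ => ?_
  rw [hA.inv_apply_self hA_det, hA_diag, hA_diag, Complex.normSq_eq_norm_sq, div_eq_mul_inv]
end
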